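/- arXiv:2412.14808 — 5 statements merged into one kernel-verified Lean document; each statement's English description precedes it below -/
import Mathlib

section
/- Let (Ω, Σ, μ) be a complete probability space, f ∈ L^1(μ), and g₁, …, g_n measurable functions. Suppose that for every real linear combination h = Σ αⱼ gⱼ (αⱼ ∈ ℝ, gⱼ real-valued), E(f | σ(h)) = 0. Then the pushforward complex measure ν on ℝⁿ defined by ν(E) = ∫_{Λ⁻¹(E)} f dμ, where Λ(ω) = (g₁(ω), …, g_n(ω)), is the zero measure. -/
open MeasureTheory Real Complex
open scoped ENNReal NNReal

set_option maxHeartbeats 1000000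

noncomputable section Stmt7Aux

namespace Stmt7Aux

variable {n : ℕ}

/-- Continuity of the Gaussian kernel with center `c`. -/
lemma gauss_cont (t : ℝ) (c : Fin n → ℝ) :
    Continuous fun x : Fin n → ℝ => rexp (-t * ∑ j, (c j - x j) ^ 2) := by
  apply Real.continuous_exp.comp
  exact continuous_const.mul <| continuous_finset_sum _ fun j _ =>
    (continuous_const.sub (continuous_apply j)).pow 2

/-- Integrability of the Gaussian kernel with center `c`. -/
lemma gauss_integrable {t : ℝ} (ht : 0 < t) (c : Fin n → ℝ) :
    Integrable (fun x : Fin n → ℝ => rexp (-t * ∑ j, (c j - x j) ^ 2)) := by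
  have h1 : (fun x : Fin n → ℝ => rexp (-t * ∑ j, (c j - x j) ^ 2))
      = fun x : Fin n → ℝ => ∏ j, rexp (-t * (x j + (- c j)) ^ 2) := by
    funext x
    rw [← Real.exp_sum]
    congr 1
    rw [Finset.mul_sum]
    exact Finset.sum_congr rfl fun j _ => by ring
  rw [h1]
  exact Integrable.fintype_prod (f := fun j (v : ℝ) => rexp (-t * (v + (- c j)) ^ 2))
    fun i => (integrable_exp_neg_mul_sq ht).comp_add_right (- c i)

/-- If two finite measures have the same characteristic function, then the integrals of all
Gaussian kernels agree. -/
lemma kernel_eq (P Q : Measure (Fin n → ℝ)) [IsFiniteMeasure P] [IsFiniteMeasure Q]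
    (hchar : ∀ α : Fin n → ℝ,
      ∫ x, Complex.exp (Complex.I * ∑ j, (α j : ℂ) * (x j : ℂ)) ∂P
        = ∫ x, Complex.exp (Complex.I * ∑ j, (α j : ℂ) * (x j : ℂ)) ∂Q)
    {t : ℝ} (ht : 0 < t) (y : Fin n → ℝ) :
    ∫ x, rexp (-t * ∑ j, (y j - x j) ^ 2) ∂P = ∫ x, rexp (-t * ∑ j, (y j - x j) ^ 2) ∂Q := by
  set s : ℝ := 1 / (4 * t) with hs_def
  have hs : 0 < s := by positivity
  have hsre : (0 : ℝ) < ((s : ℂ)).re := by simpa using hs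
  set C : ℂ := ((π : ℂ) / (s : ℂ)) ^ ((n : ℂ) / 2) with hC_def
  have hC : C ≠ 0 := by
    rw [hC_def]
    intro hzero
    rw [Complex.cpow_eq_zero_iff] at hzero
    have : (π : ℂ) / (s : ℂ) ≠ 0 := by
      apply div_ne_zero <;> simp [Complex.ofReal_ne_zero, Real.pi_ne_zero, ne_of_gt hs]
    exact this hzero.1
  -- the pointwise Gaussian Fourier identity
  have claim : ∀ u : Fin n → ℝ,
      C * ((rexp (-t * ∑ j, (u j) ^ 2) : ℝ) : ℂ)
        = ∫ α : Fin n → ℝ,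
            Complex.exp (-(s : ℂ) * ∑ j, ((α j : ℝ) : ℂ) ^ 2
              + ∑ j, (Complex.I * ((u j : ℝ) : ℂ)) * ((α j : ℝ) : ℂ)) := by
    intro u
    rw [GaussianFourier.integral_cexp_neg_mul_sum_add hsre (fun j => Complex.I * (u j : ℂ))]
    have h1 : (∑ j, (Complex.I * ((u j : ℝ) : ℂ)) ^ 2) = - ((∑ j, (u j : ℝ) ^ 2 : ℝ) : ℂ) := by
      push_cast
      rw [← Finset.sum_neg_distrib]
      exact Finset.sum_congr rfl fun j _ => by rw [mul_pow, Complex.I_sq]; ring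
    rw [h1]
    have h2 : (-((∑ j, (u j : ℝ) ^ 2 : ℝ) : ℂ)) / (4 * (s : ℂ))
        = ((-t * ∑ j, (u j) ^ 2 : ℝ) : ℂ) := by
      have h4s : (4 : ℝ) * s ≠ 0 := by positivity
      have ht' : (-t * ∑ j, (u j) ^ 2 : ℝ) = (-(∑ j, (u j) ^ 2)) / (4 * s) := by
        rw [hs_def]; field_simp
      rw [ht']
      push_cast
      ring
    rw [h2, ← Complex.ofReal_exp, Fintype.card_fin, hC_def]
  -- the Fubini identity, for any finite measure R
  have key : ∀ (R : Measure (Fin n → ℝ)), IsFiniteMeasure R →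
      C * ∫ x, ((rexp (-t * ∑ j, (y j - x j) ^ 2) : ℝ) : ℂ) ∂ R
        = ∫ α : Fin n → ℝ,
            (Complex.exp (-(s : ℂ) * ∑ j, ((α j : ℝ) : ℂ) ^ 2
                + Complex.I * ∑ j, ((y j : ℝ) : ℂ) * ((α j : ℝ) : ℂ))
              * ∫ x, Complex.exp (Complex.I * ∑ j, (-((α j : ℝ) : ℂ)) * ((x j : ℝ) : ℂ)) ∂ R) := by
    intro R hRfin
    haveI := hRfin
    set F : (Fin n → ℝ) → (Fin n → ℝ) → ℂ := fun x α =>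
      Complex.exp (-(s : ℂ) * ∑ j, ((α j : ℝ) : ℂ) ^ 2
        + ∑ j, (Complex.I * ((y j - x j : ℝ) : ℂ)) * ((α j : ℝ) : ℂ)) with hF_def
    have hF_cont : Continuous (Function.uncurry F) := by
      apply Complex.continuous_exp.comp
      apply Continuous.add
      · exact continuous_const.mul <| continuous_finset_sum _ fun j _ =>
          (Complex.continuous_ofReal.comp ((continuous_apply j).comp continuous_snd)).pow 2
      · exact continuous_finset_sum _ fun j _ =>
          ((continuous_const.mul (Complex.continuous_ofReal.comp
            (continuous_const.sub ((continuous_apply j).comp continuous_fst)))).mul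
            (Complex.continuous_ofReal.comp ((continuous_apply j).comp continuous_snd)))
    have hnorm : ∀ x α, ‖F x α‖ = rexp (-s * ∑ j, (α j) ^ 2) := by
      intro x α
      have hz : (-(s : ℂ) * ∑ j, ((α j : ℝ) : ℂ) ^ 2
          + ∑ j, (Complex.I * ((y j - x j : ℝ) : ℂ)) * ((α j : ℝ) : ℂ))
          = ((-s * ∑ j, (α j) ^ 2 : ℝ) : ℂ)
            + Complex.I * ((∑ j, (y j - x j) * α j : ℝ) : ℂ) := by
        push_cast
        simp only [Finset.mul_sum]
        congr 1
        exact Finset.sum_congr rfl fun j _ => by ring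
      simp only [hF_def]
      rw [hz, Complex.norm_exp]
      congr 1
      simp only [Complex.add_re, Complex.ofReal_re, Complex.mul_re, Complex.I_re, Complex.I_im,
        Complex.ofReal_im]
      ring
    have hF_int : Integrable (Function.uncurry F) (R.prod volume) := by
      rw [integrable_prod_iff hF_cont.aestronglyMeasurable]
      constructor
      · apply Filter.Eventually.of_forall
        intro x
        exact GaussianFourier.integrable_cexp_neg_mul_sum_add hsre
          (fun j => Complex.I * ((y j - x j : ℝ) : ℂ))
      · have hval : (fun x => ∫ α, ‖F x α‖)
            = fun _ : Fin n → ℝ => ∫ α : Fin n → ℝ, rexp (-s * ∑ j, (α j) ^ 2) := by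
          funext x
          exact integral_congr_ae (Filter.Eventually.of_forall fun α => hnorm x α)
        simpa only [Function.uncurry_apply_pair, hval] using
          (integrable_const (∫ α : Fin n → ℝ, rexp (-s * ∑ j, (α j) ^ 2)) (μ := R))
    have hstep1 : C * ∫ x, ((rexp (-t * ∑ j, (y j - x j) ^ 2) : ℝ) : ℂ) ∂ R
        = ∫ x, ∫ α, F x α ∂volume ∂ R := by
      rw [← integral_const_mul]
      apply integral_congr_ae
      apply Filter.Eventually.of_forall
      intro x
      exact claim (fun j => y j - x j)
    rw [hstep1, integral_integral_swap hF_int]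
    apply integral_congr_ae
    apply Filter.Eventually.of_forall
    intro α
    have hsplit : ∀ x : Fin n → ℝ, F x α
        = Complex.exp (-(s : ℂ) * ∑ j, ((α j : ℝ) : ℂ) ^ 2
            + Complex.I * ∑ j, ((y j : ℝ) : ℂ) * ((α j : ℝ) : ℂ))
          * Complex.exp (Complex.I * ∑ j, (-((α j : ℝ) : ℂ)) * ((x j : ℝ) : ℂ)) := by
      intro x
      simp only [hF_def]
      rw [← Complex.exp_add]
      congr 1
      push_cast
      simp only [Finset.mul_sum]
      rw [add_assoc, ← Finset.sum_add_distrib, ← Finset.sum_add_distrib,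
        ← Finset.sum_add_distrib]
      exact Finset.sum_congr rfl fun j _ => by ring
    simp_rw [hsplit]
    rw [integral_const_mul]
  have hflip : ∀ α : Fin n → ℝ,
      ∫ x, Complex.exp (Complex.I * ∑ j, (-((α j : ℝ) : ℂ)) * ((x j : ℝ) : ℂ)) ∂P
        = ∫ x, Complex.exp (Complex.I * ∑ j, (-((α j : ℝ) : ℂ)) * ((x j : ℝ) : ℂ)) ∂Q := by
    intro α
    have hx := hchar fun j => -(α j)
    have hrw : ∀ (S : Measure (Fin n → ℝ)),
        ∫ x, Complex.exp (Complex.I * ∑ j, ((-(α j) : ℝ) : ℂ) * ((x j : ℝ) : ℂ)) ∂S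
          = ∫ x, Complex.exp (Complex.I * ∑ j, (-((α j : ℝ) : ℂ)) * ((x j : ℝ) : ℂ)) ∂S := by
      intro S
      apply integral_congr_ae
      apply Filter.Eventually.of_forall
      intro x
      norm_cast
    rw [hrw P, hrw Q] at hx
    exact hx
  have hP := key P inferInstance
  have hQ := key Q inferInstance
  have hPQ : C * ∫ x, ((rexp (-t * ∑ j, (y j - x j) ^ 2) : ℝ) : ℂ) ∂P
      = C * ∫ x, ((rexp (-t * ∑ j, (y j - x j) ^ 2) : ℝ) : ℂ) ∂Q := by
    rw [hP, hQ]
    apply integral_congr_ae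
    apply Filter.Eventually.of_forall
    intro α
    simp only [hflip α]
  have hcc := mul_left_cancel₀ hC hPQ
  have hor : ∀ (S : Measure (Fin n → ℝ )),
      ∫ x, ((rexp (-t * ∑ j, (y j - x j) ^ 2) : ℝ) : ℂ) ∂S
        = ((∫ x, rexp (-t * ∑ j, (y j - x j) ^ 2) ∂S : ℝ) : ℂ) := fun S => integral_ofReal
  rw [hor P, hor Q] at hcc
  exact_mod_cast hcc

/-- If the Gaussian-kernel integrals agree, then integrals of bounded continuous functions
agree. -/
lemma integral_bcf_eq (P Q : Measure (Fin n → ℝ)) [IsFiniteMeasure P] [IsFiniteMeasure Q]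
    (hker : ∀ {t : ℝ}, 0 < t → ∀ y : Fin n → ℝ,
      ∫ x, rexp (-t * ∑ j, (y j - x j) ^ 2) ∂P = ∫ x, rexp (-t * ∑ j, (y j - x j) ^ 2) ∂Q)
    (f : BoundedContinuousFunction (Fin n → ℝ) ℝ) :
    ∫ x, f x ∂P = ∫ x, f x ∂Q := by
  classical
  -- the standard Gaussian weight
  set g0 : (Fin n → ℝ) → ℝ := fun z => rexp (-1 * ∑ j, ((0 : Fin n → ℝ) j - z j) ^ 2)
    with hg0_def
  have hg0_eq : ∀ z, g0 z = rexp (-1 * ∑ j, (z j) ^ 2) := by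
    intro z
    simp only [hg0_def, Pi.zero_apply]
    congr 2
    exact Finset.sum_congr rfl fun j _ => by ring
  have hg0_cont : Continuous g0 := gauss_cont 1 0
  have hg0_int : Integrable g0 := gauss_integrable one_pos 0
  have hg0_nonneg : ∀ z, 0 ≤ g0 z := fun z => (Real.exp_pos _).le
  set Cg : ℝ := ∫ z, g0 z with hCg_def
  have hCg_pos : 0 < Cg := by
    rw [hCg_def, integral_pos_iff_support_of_nonneg (fun z => hg0_nonneg z) hg0_int]
    have hsupp : Function.support g0 = Set.univ := by
      ext z; simp [hg0_def, Real.exp_ne_zero, Function.mem_support]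
    rw [hsupp]
    exact isOpen_univ.measure_pos volume Set.univ_nonempty
  -- scaling sequence
  set R : ℕ → ℝ := fun k => ((k : ℝ) + 1)⁻¹ with hR_def
  have hT_pos : ∀ k : ℕ, (0 : ℝ) < ((k : ℝ) + 1) ^ 2 := fun k => by positivity
  have hR_pos : ∀ k, 0 < R k := fun k => by rw [hR_def]; positivity
  have hTR : ∀ k : ℕ, ((k : ℝ) + 1) ^ 2 * (R k) ^ 2 = 1 := by
    intro k
    rw [hR_def]
    have : ((k : ℝ) + 1) ≠ 0 := by positivity
    field_simp
  have hR_lim : Filter.Tendsto R Filter.atTop (nhds 0) := by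
    rw [hR_def]
    apply Filter.Tendsto.comp tendsto_inv_atTop_zero
    exact Filter.tendsto_atTop_add_const_right _ 1 tendsto_natCast_atTop_atTop
  -- the smoothed integrand
  set innr : ℕ → (Fin n → ℝ) → ℝ := fun k x => ∫ z, f (x + R k • z) * g0 z with hinnr_def
  have hM : ∀ x : Fin n → ℝ, |f x| ≤ ‖f‖ := fun x => by
    simpa [Real.norm_eq_abs] using f.norm_coe_le_norm x
  have hF_cont : ∀ k, Continuous fun p : (Fin n → ℝ) × (Fin n → ℝ) =>
      f (p.1 + R k • p.2) * g0 p.2 := by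
    intro k
    apply Continuous.mul
    · exact f.continuous.comp (continuous_fst.add (continuous_snd.const_smul (R k)))
    · exact hg0_cont.comp continuous_snd
  have hinnr_meas : ∀ k, AEStronglyMeasurable (innr k) P ∧ AEStronglyMeasurable (innr k) Q :=
    fun k => ⟨((hF_cont k).aestronglyMeasurable).integral_prod_right',
      ((hF_cont k).aestronglyMeasurable).integral_prod_right'⟩
  have hinnr_int_z : ∀ k (x : Fin n → ℝ),
      Integrable (fun z => f (x + R k • z) * g0 z) := by
    intro k x
    exact hg0_int.bdd_mul
      ((f.continuous.comp (continuous_const.add (continuous_id.const_smul (R k)))).aestronglyMeasurable)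
      (c := ‖f‖) (Filter.Eventually.of_forall fun z => by simpa [Real.norm_eq_abs] using hM (x + R k • z))
  have hinnr_bd : ∀ k x, |innr k x| ≤ ‖f‖ * Cg := by
    intro k x
    simp only [hinnr_def]
    calc |∫ z, f (x + R k • z) * g0 z| ≤ ∫ z, ‖f‖ * g0 z := by
          rw [← Real.norm_eq_abs]
          apply norm_integral_le_of_norm_le (hg0_int.const_mul ‖f‖)
          apply Filter.Eventually.of_forall
          intro z
          rw [norm_mul, Real.norm_eq_abs, Real.norm_eq_abs, _root_.abs_of_nonneg (hg0_nonneg z)]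
          exact mul_le_mul_of_nonneg_right (hM _) (hg0_nonneg z)
      _ = ‖f‖ * Cg := by rw [integral_const_mul, hCg_def]
  -- pointwise limit of the smoothed integrand
  have hinnr_lim : ∀ x, Filter.Tendsto (fun k => innr k x) Filter.atTop (nhds (f x * Cg)) := by
    intro x
    have h1 : Filter.Tendsto (fun k => innr k x) Filter.atTop (nhds (∫ z, f x * g0 z)) := by
      apply tendsto_integral_of_dominated_convergence (fun z => ‖f‖ * g0 z)
      · intro k
        exact (hinnr_int_z k x).aestronglyMeasurable
      · exact hg0_int.const_mul ‖f‖
      · intro k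
        apply Filter.Eventually.of_forall
        intro z
        rw [norm_mul, Real.norm_eq_abs, Real.norm_eq_abs, _root_.abs_of_nonneg (hg0_nonneg z)]
        exact mul_le_mul_of_nonneg_right (hM _) (hg0_nonneg z)
      · apply Filter.Eventually.of_forall
        intro z
        apply Filter.Tendsto.mul _ tendsto_const_nhds
        have h3 : Filter.Tendsto (fun k => R k • z) Filter.atTop (nhds ((0 : ℝ) • z)) :=
          hR_lim.smul_const z
        rw [zero_smul] at h3
        have h2 : Filter.Tendsto (fun k => x + R k • z) Filter.atTop (nhds x) := by
          simpa using tendsto_const_nhds.add h3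
        exact (f.continuous.tendsto x).comp h2
    rw [integral_const_mul, ← hCg_def] at h1
    exact h1
  -- Claim A : the smoothed integrals agree
  have claimA : ∀ k, ∫ x, innr k x ∂P = ∫ x, innr k x ∂Q := by
    intro k
    have ht : (0 : ℝ) < ((k : ℝ) + 1) ^ 2 := hT_pos k
    -- rewrite innr k x via scaling and translation
    have hA : ∀ x : Fin n → ℝ, innr k x
        = |((R k) ^ n)⁻¹| * ∫ y : Fin n → ℝ,
            f y * rexp (-(((k : ℝ) + 1) ^ 2) * ∑ j, (y j - x j) ^ 2) := by
      intro x
      have hsmul : ∀ z : Fin n → ℝ,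
          f (x + R k • z) * g0 z = (fun w : Fin n → ℝ =>
            f (x + w) * rexp (-(((k : ℝ) + 1) ^ 2) * ∑ j, (w j) ^ 2)) (R k • z) := by
        intro z
        simp only []
        rw [hg0_eq z]
        congr 1
        have h1 : ∑ j, ((R k • z) j) ^ 2 = (R k) ^ 2 * ∑ j, (z j) ^ 2 := by
          rw [Finset.mul_sum]
          refine Finset.sum_congr rfl fun j _ => ?_
          simp only [Pi.smul_apply, smul_eq_mul]
          ring
        rw [h1, ← mul_assoc]
        have h2 : -(((k : ℝ) + 1) ^ 2) * (R k) ^ 2 = -1 := by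
          rw [neg_mul, hTR k]
        rw [h2]
      have hcs := MeasureTheory.Measure.integral_comp_smul
        (μ := (volume : Measure (Fin n → ℝ)))
        (fun w : Fin n → ℝ => f (x + w) * rexp (-(((k : ℝ) + 1) ^ 2) * ∑ j, (w j) ^ 2)) (R k)
      have hfin : Module.finrank ℝ (Fin n → ℝ) = n := by
        rw [Module.finrank_fintype_fun_eq_card, Fintype.card_fin]
      rw [hfin] at hcs
      have hinnr_eq : innr k x
          = ∫ z : Fin n → ℝ, (fun w : Fin n → ℝ =>
              f (x + w) * rexp (-(((k : ℝ) + 1) ^ 2) * ∑ j, (w j) ^ 2)) (R k • z) := by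
        simp only [hinnr_def]
        exact integral_congr_ae (Filter.Eventually.of_forall fun z => hsmul z)
      rw [hinnr_eq, hcs, smul_eq_mul]
      congr 1
      -- the translation
      have htrans := MeasureTheory.integral_add_left_eq_self
        (μ := (volume : Measure (Fin n → ℝ)))
        (fun y : Fin n → ℝ => f y * rexp (-(((k : ℝ) + 1) ^ 2) * ∑ j, (y j - x j) ^ 2)) x
      rw [← htrans]
      apply integral_congr_ae
      apply Filter.Eventually.of_forall
      intro w
      simp only [Pi.add_apply]
      have harg : ∑ j, (x j + w j - x j) ^ 2 = ∑ j, (w j) ^ 2 :=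
        Finset.sum_congr rfl fun j _ => by ring
      rw [harg]
    simp_rw [hA]
    rw [integral_const_mul, integral_const_mul]
    congr 1
    -- Fubini on both sides
    have hswap : ∀ (S : Measure (Fin n → ℝ)), IsFiniteMeasure S →
        ∫ x, (∫ y : Fin n → ℝ,
            f y * rexp (-(((k : ℝ) + 1) ^ 2) * ∑ j, (y j - x j) ^ 2)) ∂S
          = ∫ y : Fin n → ℝ, f y
              * ∫ x, rexp (-(((k : ℝ) + 1) ^ 2) * ∑ j, (y j - x j) ^ 2) ∂S := by
      intro S hSfin
      haveI := hSfin
      have hG_cont : Continuous (Function.uncurry fun (x : Fin n → ℝ) (y : Fin n → ℝ) =>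
          f y * rexp (-(((k : ℝ) + 1) ^ 2) * ∑ j, (y j - x j) ^ 2)) := by
        apply Continuous.mul
        · exact f.continuous.comp continuous_snd
        · apply Real.continuous_exp.comp
          exact continuous_const.mul <| continuous_finset_sum _ fun j _ =>
            (((continuous_apply j).comp continuous_snd).sub
              ((continuous_apply j).comp continuous_fst)).pow 2
      have hgauss_int_x : ∀ x : Fin n → ℝ,
          Integrable (fun y : Fin n → ℝ =>
            rexp (-(((k : ℝ) + 1) ^ 2) * ∑ j, (y j - x j) ^ 2)) := by
        intro x
        have hgg := gauss_integrable ht x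
        apply hgg.congr
        apply Filter.Eventually.of_forall
        intro y
        show rexp (-(((k : ℝ) + 1) ^ 2) * ∑ j, (x j - y j) ^ 2)
          = rexp (-(((k : ℝ) + 1) ^ 2) * ∑ j, (y j - x j) ^ 2)
        have harg : ∑ j, (x j - y j) ^ 2 = ∑ j, (y j - x j) ^ 2 :=
          Finset.sum_congr rfl fun j _ => by ring
        rw [harg]
      have hfy_int : ∀ x : Fin n → ℝ, Integrable (fun y : Fin n → ℝ =>
          f y * rexp (-(((k : ℝ) + 1) ^ 2) * ∑ j, (y j - x j) ^ 2)) :=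
        fun x => (hgauss_int_x x).bdd_mul f.continuous.aestronglyMeasurable
          (c := ‖f‖) (Filter.Eventually.of_forall fun y => by simpa [Real.norm_eq_abs] using hM y)
      set Cst : ℝ := ∫ z : Fin n → ℝ, rexp (-(((k : ℝ) + 1) ^ 2) * ∑ j, (z j) ^ 2)
        with hCst_def
      have hCstv : ∀ x : Fin n → ℝ,
          ∫ y : Fin n → ℝ, rexp (-(((k : ℝ) + 1) ^ 2) * ∑ j, (y j - x j) ^ 2) = Cst := by
        intro x
        have htr := MeasureTheory.integral_add_left_eq_self
          (μ := (volume : Measure (Fin n → ℝ)))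
          (fun y : Fin n → ℝ => rexp (-(((k : ℝ) + 1) ^ 2) * ∑ j, (y j - x j) ^ 2)) x
        rw [← htr, hCst_def]
        apply integral_congr_ae
        apply Filter.Eventually.of_forall
        intro w
        simp only [Pi.add_apply]
        have harg : ∑ j, (x j + w j - x j) ^ 2 = ∑ j, (w j) ^ 2 :=
          Finset.sum_congr rfl fun j _ => by ring
        rw [harg]
      have hG_int : Integrable (Function.uncurry fun (x : Fin n → ℝ) (y : Fin n → ℝ) =>
          f y * rexp (-(((k : ℝ) + 1) ^ 2) * ∑ j, (y j - x j) ^ 2)) (S.prod volume) := by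
        rw [integrable_prod_iff hG_cont.aestronglyMeasurable]
        constructor
        · exact Filter.Eventually.of_forall fun x => hfy_int x
        · apply Integrable.mono' (integrable_const (‖f‖ * Cst))
          · exact (hG_cont.norm.aestronglyMeasurable).integral_prod_right'
          · apply Filter.Eventually.of_forall
            intro x
            rw [Real.norm_eq_abs, _root_.abs_of_nonneg (integral_nonneg fun y => norm_nonneg _)]
            calc ∫ y : Fin n → ℝ, ‖f y * rexp (-(((k : ℝ) + 1) ^ 2) * ∑ j, (y j - x j) ^ 2)‖
                ≤ ∫ y : Fin n → ℝ, ‖f‖ * rexp (-(((k : ℝ) + 1) ^ 2) * ∑ j, (y j - x j) ^ 2) := by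
                  apply integral_mono (hfy_int x).norm ((hgauss_int_x x).const_mul ‖f‖)
                  intro y
                  simp only [norm_mul, Real.norm_eq_abs]
                  rw [_root_.abs_of_nonneg (Real.exp_pos _).le]
                  exact mul_le_mul_of_nonneg_right (hM y) (Real.exp_pos _).le
              _ = ‖f‖ * Cst := by rw [integral_const_mul, hCstv x]
      have hsw := integral_integral_swap (f := fun (x : Fin n → ℝ) (y : Fin n → ℝ) =>
        f y * rexp (-(((k : ℝ) + 1) ^ 2) * ∑ j, (y j - x j) ^ 2)) hG_int
      rw [hsw]
      apply integral_congr_ae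
      apply Filter.Eventually.of_forall
      intro y
      simp only []
      rw [integral_const_mul]
    rw [hswap P inferInstance, hswap Q inferInstance]
    apply integral_congr_ae
    apply Filter.Eventually.of_forall
    intro y
    simp only []
    rw [hker ht y]
  -- Claim B : pass to the limit
  have hlimP : Filter.Tendsto (fun k => ∫ x, innr k x ∂P) Filter.atTop
      (nhds (∫ x, f x * Cg ∂P)) := by
    apply tendsto_integral_of_dominated_convergence (fun _ => ‖f‖ * Cg)
    · intro k; exact (hinnr_meas k).1
    · exact integrable_const _
    · intro k
      apply Filter.Eventually.of_forall
      intro x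
      rw [Real.norm_eq_abs]
      exact hinnr_bd k x
    · exact Filter.Eventually.of_forall hinnr_lim
  have hlimQ : Filter.Tendsto (fun k => ∫ x, innr k x ∂Q) Filter.atTop
      (nhds (∫ x, f x * Cg ∂Q)) := by
    apply tendsto_integral_of_dominated_convergence (fun _ => ‖f‖ * Cg)
    · intro k; exact (hinnr_meas k).2
    · exact integrable_const _
    · intro k
      apply Filter.Eventually.of_forall
      intro x
      rw [Real.norm_eq_abs]
      exact hinnr_bd k x
    · exact Filter.Eventually.of_forall hinnr_lim
  have heq : ∫ x, f x * Cg ∂P = ∫ x, f x * Cg ∂Q := by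
    apply tendsto_nhds_unique hlimP
    simpa only [claimA] using hlimQ
  rw [integral_mul_const, integral_mul_const] at heq
  exact mul_right_cancel₀ (ne_of_gt hCg_pos) heq

/-- Uniqueness of characteristic functions for finite measures on `Fin n → ℝ`. -/
theorem ext_of_char (P Q : Measure (Fin n → ℝ)) [IsFiniteMeasure P] [IsFiniteMeasure Q]
    (hchar : ∀ α : Fin n → ℝ,
      ∫ x, Complex.exp (Complex.I * ∑ j, (α j : ℂ) * (x j : ℂ)) ∂P
        = ∫ x, Complex.exp (Complex.I * ∑ j, (α j : ℂ) * (x j : ℂ)) ∂Q) :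
    P = Q := by
  have hbcf := integral_bcf_eq P Q (fun {t} ht y => kernel_eq P Q hchar ht y)
  apply ext_of_forall_lintegral_eq_of_IsFiniteMeasure
  intro f0
  have lip : LipschitzWith 1 ((↑) : ℝ≥0 → ℝ) := isometry_subtype_coe.lipschitz
  set fr : BoundedContinuousFunction (Fin n → ℝ) ℝ :=
    BoundedContinuousFunction.comp _ lip f0 with hfr_def
  have hfr : ∀ x, (f0 x : ℝ) = fr x := fun x => rfl
  have h1 : ∫⁻ x, (f0 x : ℝ≥0∞) ∂P = ENNReal.ofReal (∫ x, (f0 x : ℝ) ∂P) :=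
    lintegral_coe_eq_integral _ (fr.integrable P)
  have h2 : ∫⁻ x, (f0 x : ℝ≥0∞) ∂Q = ENNReal.ofReal (∫ x, (f0 x : ℝ) ∂Q) :=
    lintegral_coe_eq_integral _ (fr.integrable Q)
  rw [h1, h2]
  congr 1
  exact hbcf fr

end Stmt7Aux

end Stmt7Aux

open Stmt7Aux in
/-- If `E(f | σ(Σⱼ αⱼ gⱼ)) = 0` for every real linear combination of the measurable functions
`g₁, …, g_n`, then the pushforward complex measure `ν(E) = ∫_{Λ⁻¹(E)} f dμ`, where
`Λ = (g₁, …, g_n)`, is the zero measure. -/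
theorem stmt7 {Ω : Type*} {m0 : MeasurableSpace Ω} (μ : Measure Ω) [IsProbabilityMeasure μ]
    (n : ℕ) (g : Fin n → Ω → ℝ) (hg : ∀ j, Measurable (g j))
    (f : Ω → ℝ) (hf : Integrable f μ)
    (h : ∀ α : Fin n → ℝ,
      μ[f|MeasurableSpace.comap (fun ω => ∑ j, α j * g j ω) inferInstance] =ᵐ[μ] 0) :
    ∀ E : Set (Fin n → ℝ), MeasurableSet E →
      ∫ ω in (fun ω (j : Fin n) => g j ω) ⁻¹' E, f ω ∂μ = 0 := by
  classical
  intro E hE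
  -- measurable representative of f
  obtain ⟨f', hf'sm, hff'⟩ : ∃ f', StronglyMeasurable f' ∧ f =ᵐ[μ] f' :=
    ⟨hf.1.mk f, hf.1.stronglyMeasurable_mk, hf.1.ae_eq_mk⟩
  have hf'int : Integrable f' μ := hf.congr hff'
  set Λ : Ω → (Fin n → ℝ) := fun ω (j : Fin n) => g j ω with hΛ_def
  have hΛ : Measurable Λ := measurable_pi_lambda _ fun j => hg j
  set νp : Measure Ω := μ.withDensity (fun ω => ENNReal.ofReal (f' ω)) with hνp_def
  set νm : Measure Ω := μ.withDensity (fun ω => ENNReal.ofReal (-f' ω)) with hνm_def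
  have hνp_fin : IsFiniteMeasure νp := by
    constructor
    rw [hνp_def, withDensity_apply _ MeasurableSet.univ, Measure.restrict_univ]
    calc ∫⁻ ω, ENNReal.ofReal (f' ω) ∂μ ≤ ∫⁻ ω, ‖f' ω‖₊ ∂μ :=
          lintegral_mono fun ω => Real.ofReal_le_enorm (f' ω)
      _ < ⊤ := hf'int.2
  have hνm_fin : IsFiniteMeasure νm := by
    constructor
    rw [hνm_def, withDensity_apply _ MeasurableSet.univ, Measure.restrict_univ]
    calc ∫⁻ ω, ENNReal.ofReal (-f' ω) ∂μ ≤ ∫⁻ ω, ‖f' ω‖₊ ∂μ := by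
          apply lintegral_mono
          intro ω
          calc ENNReal.ofReal (-f' ω) ≤ (‖-f' ω‖₊ : ℝ≥0∞) := Real.ofReal_le_enorm (-f' ω)
            _ = (‖f' ω‖₊ : ℝ≥0∞) := by rw [nnnorm_neg]
      _ < ⊤ := hf'int.2
  haveI := hνp_fin
  haveI := hνm_fin
  -- the basic decomposition of set integrals
  have L1 : ∀ s : Set Ω, MeasurableSet s →
      ∫ ω in s, f ω ∂μ = (νp s).toReal - (νm s).toReal := by
    intro s hs
    have e1 : ∫ ω in s, f ω ∂μ = ∫ ω in s, f' ω ∂μ :=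
      integral_congr_ae (ae_restrict_of_ae hff')
    rw [e1, integral_eq_lintegral_pos_part_sub_lintegral_neg_part (hf'int.restrict),
      hνp_def, hνm_def, withDensity_apply _ hs, withDensity_apply _ hs]
  -- vanishing of the integrals over linear-combination preimages
  have HA : ∀ (α : Fin n → ℝ) (B : Set ℝ), MeasurableSet B →
      νp ((fun ω => ∑ j, α j * g j ω) ⁻¹' B) = νm ((fun ω => ∑ j, α j * g j ω) ⁻¹' B) := by
    intro α B hB
    have hsum : Measurable (fun ω => ∑ j, α j * g j ω) :=
      Finset.measurable_sum _ fun j _ => (hg j).const_mul (α j)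
    have hmle : MeasurableSpace.comap (fun ω => ∑ j, α j * g j ω) inferInstance ≤ m0 :=
      hsum.comap_le
    have hs0 : MeasurableSet ((fun ω => ∑ j, α j * g j ω) ⁻¹' B) := hsum hB
    have hsm : MeasurableSet[MeasurableSpace.comap (fun ω => ∑ j, α j * g j ω) inferInstance]
        ((fun ω => ∑ j, α j * g j ω) ⁻¹' B) := ⟨B, hB, rfl⟩
    have hzero : ∫ ω in (fun ω => ∑ j, α j * g j ω) ⁻¹' B, f ω ∂μ = 0 := by
      rw [← setIntegral_condExp hmle hf hsm]
      calc ∫ ω in (fun ω => ∑ j, α j * g j ω) ⁻¹' B,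
            (μ[f|MeasurableSpace.comap (fun ω => ∑ j, α j * g j ω) inferInstance]) ω ∂μ
          = ∫ ω in (fun ω => ∑ j, α j * g j ω) ⁻¹' B, (0 : ℝ) ∂μ :=
            integral_congr_ae (ae_restrict_of_ae (h α))
        _ = 0 := by simp
    have hL := L1 _ hs0
    rw [hzero] at hL
    have hreal : (νp ((fun ω => ∑ j, α j * g j ω) ⁻¹' B)).toReal
        = (νm ((fun ω => ∑ j, α j * g j ω) ⁻¹' B)).toReal := by linarith
    exact (ENNReal.toReal_eq_toReal_iff' (measure_ne_top νp _) (measure_ne_top νm _)).mp hreal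
  -- pushforward measures
  set P : Measure (Fin n → ℝ) := νp.map Λ with hP_def
  set Q : Measure (Fin n → ℝ) := νm.map Λ with hQ_def
  have hP_fin : IsFiniteMeasure P := by
    constructor
    rw [hP_def, Measure.map_apply hΛ MeasurableSet.univ]
    exact measure_lt_top _ _
  have hQ_fin : IsFiniteMeasure Q := by
    constructor
    rw [hQ_def, Measure.map_apply hΛ MeasurableSet.univ]
    exact measure_lt_top _ _
  haveI := hP_fin
  haveI := hQ_fin
  -- characteristic functions agree
  have hchar : ∀ α : Fin n → ℝ,
      ∫ x, Complex.exp (Complex.I * ∑ j, (α j : ℂ) * (x j : ℂ)) ∂P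
        = ∫ x, Complex.exp (Complex.I * ∑ j, (α j : ℂ) * (x j : ℂ)) ∂Q := by
    intro α
    set sα : (Fin n → ℝ) → ℝ := fun x => ∑ j, α j * x j with hsα_def
    have hsαm : Measurable sα := by
      rw [hsα_def]
      exact Finset.measurable_sum _ fun j _ => by fun_prop
    have hmap : P.map sα = Q.map sα := by
      apply Measure.ext
      intro B hB
      rw [Measure.map_apply hsαm hB, Measure.map_apply hsαm hB,
        hP_def, hQ_def, Measure.map_apply hΛ (hsαm hB), Measure.map_apply hΛ (hsαm hB)]
      have hpre : Λ ⁻¹' (sα ⁻¹' B) = (fun ω => ∑ j, α j * g j ω) ⁻¹' B := rfl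
      rw [hpre]
      exact HA α B hB
    have hφ_cont : Continuous fun r : ℝ => Complex.exp (Complex.I * (r : ℂ)) :=
      Complex.continuous_exp.comp (continuous_const.mul Complex.continuous_ofReal)
    have hrw : ∀ (S : Measure (Fin n → ℝ)),
        ∫ x, Complex.exp (Complex.I * ∑ j, (α j : ℂ) * (x j : ℂ)) ∂S
          = ∫ r, Complex.exp (Complex.I * (r : ℂ)) ∂(S.map sα) := by
      intro S
      rw [integral_map hsαm.aemeasurable hφ_cont.aestronglyMeasurable]
      apply integral_congr_ae
      apply Filter.Eventually.of_forall
      intro x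
      have hcast : ((sα x : ℝ) : ℂ) = ∑ j, (α j : ℂ) * (x j : ℂ) := by
        rw [hsα_def]
        push_cast
        rfl
      simp only []
      rw [hcast]
    rw [hrw P, hrw Q, hmap]
  -- conclude
  have hPQ : P = Q := ext_of_char P Q hchar
  have hpre : MeasurableSet (Λ ⁻¹' E) := hΛ hE
  have hL := L1 (Λ ⁻¹' E) hpre
  have hPE : P E = νp (Λ ⁻¹' E) := by rw [hP_def, Measure.map_apply hΛ hE]
  have hQE : Q E = νm (Λ ⁻¹' E) := by rw [hQ_def, Measure.map_apply hΛ hE]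
  have hfinal : ∫ ω in Λ ⁻¹' E, f ω ∂μ = (P E).toReal - (Q E).toReal := by
    rw [hPE, hQE]; exact hL
  rw [hPQ] at hfinal
  simpa using hfinal
end

section
/- Let p = 2k + 2 with k ≥ 1 an integer, and X a closed subspace of L^p(μ) containing the constants. If P is a contractive projection on X with P1 = 1, then for all g₁, g₂, g₃ in the range of P and all f ∈ X: ∫_Ω g₁·g₂·conj(g₃)·conj(f − Pf) dμ = 0. -/
open Polynomial in
theorem stmt9_poly_real_vanish (Q : Polynomial (Polynomial ℂ))
    (h : ∀ x y : ℝ, ((Q.eval (C (y : ℂ))).eval (x : ℂ)) = 0) : Q = 0 := by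
  apply Polynomial.eq_zero_of_infinite_isRoot
  apply Set.Infinite.mono (s := Set.range (fun y : ℝ => (C (y : ℂ) : Polynomial ℂ)))
  · rintro _ ⟨y, rfl⟩
    show Q.IsRoot _
    apply Polynomial.eq_zero_of_infinite_isRoot
    apply Set.Infinite.mono (s := Set.range (fun x : ℝ => (x : ℂ)))
    · rintro _ ⟨x, rfl⟩
      exact h x y
    · exact Set.infinite_range_of_injective Complex.ofReal_injective
  · exact Set.infinite_range_of_injective
      (Polynomial.C_injective.comp Complex.ofReal_injective)

open Polynomial in
theorem stmt9_vanish_bi {N : ℕ} (c : ℕ → ℕ → ℂ)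
    (h : ∀ z : ℂ, ∑ i ∈ Finset.range N, ∑ j ∈ Finset.range N,
      c i j * z ^ i * (starRingEnd ℂ) z ^ j = 0) :
    ∀ i < N, ∀ j < N, c i j = 0 := by
  set A : Polynomial (Polynomial ℂ) := C X + C (C Complex.I) * X with hA
  set B : Polynomial (Polynomial ℂ) := C X - C (C Complex.I) * X with hB
  set Q : Polynomial (Polynomial ℂ) :=
    ∑ i ∈ Finset.range N, ∑ j ∈ Finset.range N, C (C (c i j)) * A ^ i * B ^ j with hQ
  have h1 : ∀ x y : ℝ, ((Q.eval (C (y : ℂ))).eval (x : ℂ)) = 0 := by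
    intro x y
    have hz := h (↑x + Complex.I * ↑y)
    have hconj : (starRingEnd ℂ) (↑x + Complex.I * ↑y) = ↑x - Complex.I * ↑y := by
      simp [map_add, map_mul, Complex.conj_ofReal, Complex.conj_I]; ring
    rw [hconj] at hz
    simpa [hQ, hA, hB, eval_finset_sum] using hz
  have h2 : Q = 0 := stmt9_poly_real_vanish Q h1
  set f : Polynomial ℂ →+* Polynomial (Polynomial ℂ) :=
    eval₂RingHom (C.comp C) (C (C (2⁻¹ : ℂ)) * (C X + X)) with hf
  set Ψ : Polynomial (Polynomial ℂ) →+* Polynomial (Polynomial ℂ) :=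
    eval₂RingHom f (C (C ((2 * Complex.I)⁻¹ : ℂ)) * (C X - X)) with hΨ
  have hCC : ∀ a : ℂ, Ψ (C (C a)) = C (C a) := by
    intro a; simp [hΨ, hf]
  have hI : Complex.I * (2 * Complex.I)⁻¹ = 2⁻¹ := by
    field_simp
  have h2CX : (C (C (2⁻¹ : ℂ)) : Polynomial (Polynomial ℂ)) * 2 = 1 := by
    have h22 : ((2 : Polynomial (Polynomial ℂ))) = C (C (2 : ℂ)) := by simp [map_ofNat]
    rw [h22, ← C_mul, ← C_mul]
    norm_num
  have hΨA : Ψ A = C X := by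
    simp only [hA, map_add, map_mul, hΨ, coe_eval₂RingHom, eval₂_C, eval₂_X, hf,
      RingHom.coe_comp, Function.comp_apply]
    rw [show (C (C Complex.I) : Polynomial (Polynomial ℂ)) *
        (C (C ((2 * Complex.I)⁻¹ : ℂ)) * (C X - X)) =
        C (C (2⁻¹ : ℂ)) * (C X - X) by rw [← mul_assoc, ← C_mul, ← C_mul, hI]]
    rw [show (C (C (2⁻¹:ℂ)) : Polynomial (Polynomial ℂ)) * (C X + X) +
        C (C (2⁻¹:ℂ)) * (C X - X) = C (C (2⁻¹:ℂ)) * 2 * C X by ring]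
    rw [h2CX, one_mul]
  have hΨB : Ψ B = X := by
    simp only [hB, map_sub, map_mul, hΨ, coe_eval₂RingHom, eval₂_C, eval₂_X, hf,
      RingHom.coe_comp, Function.comp_apply]
    rw [show (C (C Complex.I) : Polynomial (Polynomial ℂ)) *
        (C (C ((2 * Complex.I)⁻¹ : ℂ)) * (C X - X)) =
        C (C (2⁻¹ : ℂ)) * (C X - X) by rw [← mul_assoc, ← C_mul, ← C_mul, hI]]
    rw [show (C (C (2⁻¹:ℂ)) : Polynomial (Polynomial ℂ)) * (C X + X) -
        C (C (2⁻¹:ℂ)) * (C X - X) = C (C (2⁻¹:ℂ)) * 2 * X by ring]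
    rw [h2CX, one_mul]
  have h3 : ∑ i ∈ Finset.range N, ∑ j ∈ Finset.range N,
      C (C (c i j)) * (C X : Polynomial (Polynomial ℂ)) ^ i * X ^ j = 0 := by
    have := congrArg Ψ h2
    rw [map_zero] at this
    rw [hQ] at this
    rw [map_sum] at this
    simp only [map_sum, map_mul, map_pow, hCC, hΨA, hΨB] at this
    exact this
  intro i0 hi0 j0 hj0
  have h4 := congrArg (fun R : Polynomial (Polynomial ℂ) => (R.coeff j0).coeff i0) h3
  simp only [finset_sum_coeff, coeff_zero] at h4
  simp only [← C_pow, ← C_mul] at h4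
  simp only [coeff_C_mul, coeff_X_pow, mul_ite, mul_one, mul_zero] at h4
  simp only [apply_ite (fun p : Polynomial ℂ => p.coeff i0), coeff_zero, coeff_C_mul,
    coeff_X_pow, mul_ite, mul_one, mul_zero] at h4
  simp only [Finset.sum_ite_eq, Finset.mem_range, hj0, if_true] at h4
  simp only [Finset.sum_ite_eq, Finset.mem_range, hi0, if_true] at h4
  exact h4

open MeasureTheory
open scoped ENNReal

theorem stmt9_add_pow_rev (x y : ℂ) (m : ℕ) :
    (x + y) ^ m = ∑ p ∈ Finset.range (m+1), (m.choose p : ℂ) * x ^ (m-p) * y ^ p := by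
  rw [add_pow]
  conv_rhs => rw [← Finset.sum_range_reflect]
  apply Finset.sum_congr rfl
  intro i hi
  rw [Finset.mem_range] at hi
  have h1 : i ≤ m := by omega
  rw [Nat.add_sub_cancel, Nat.sub_sub_self h1, Nat.choose_symm h1]
  ring

theorem stmt9_memLp_conj {Ω : Type*} [MeasurableSpace Ω] {μ : Measure Ω} {p : ℝ≥0∞}
    {f : Ω → ℂ} (hf : MemLp f p μ) :
    MemLp (fun x => (starRingEnd ℂ) (f x)) p μ := by
  refine ⟨RCLike.continuous_conj.comp_aestronglyMeasurable hf.1, ?_⟩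
  have : eLpNorm (fun x => (starRingEnd ℂ) (f x)) p μ = eLpNorm f p μ :=
    eLpNorm_conj f p μ
  rw [this]
  exact hf.2

/-- Integrability of a monomial of total degree at most `n` in seven `L^n` functions. -/
theorem stmt9_integrable_monomial {Ω : Type*} [MeasurableSpace Ω] {μ : Measure Ω}
    [IsProbabilityMeasure μ] {n : ℕ} (hn : n ≠ 0)
    (f : Fin 7 → Ω → ℂ) (hf : ∀ i, MemLp (f i) ((n : ℝ≥0∞)) μ)
    (e : Fin 7 → ℕ) (he : ∑ i, e i ≤ n) :
    Integrable (fun x => ∏ i, (f i x) ^ (e i)) μ := by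
  set S : Ω → ℝ := fun x => ∑ i, ‖f i x‖ with hS
  have hSnn : ∀ x, 0 ≤ S x := fun x => Finset.sum_nonneg fun i _ => norm_nonneg _
  have hSm : MemLp S ((n : ℝ≥0∞)) μ := by
    exact memLp_finset_sum Finset.univ fun i _ => (hf i).norm
  have hSm1 : MemLp (fun x => 1 + S x) ((n : ℝ≥0∞)) μ := (memLp_const (1:ℝ)).add hSm
  have hint : Integrable (fun x => (1 + S x) ^ n) μ := by
    have h1 := hSm1.integrable_norm_rpow (by simpa using hn) (by simp)
    apply h1.congr
    apply Filter.Eventually.of_forall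
    intro x
    show ‖1 + S x‖ ^ ((n : ℝ≥0∞)).toReal = (1 + S x) ^ n
    rw [Real.norm_of_nonneg (by linarith [hSnn x])]
    rw [ENNReal.toReal_natCast, Real.rpow_natCast]
  have hmeas : AEStronglyMeasurable (fun x => ∏ i, (f i x) ^ (e i)) μ := by
    apply Finset.aestronglyMeasurable_fun_prod
    intro i _
    exact ((hf i).1).pow _
  refine hint.mono' hmeas (Filter.Eventually.of_forall fun x => ?_)
  calc ‖∏ i, (f i x) ^ (e i)‖ = ∏ i, ‖f i x‖ ^ (e i) := by
        rw [norm_prod]; exact Finset.prod_congr rfl fun i _ => norm_pow _ _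
    _ ≤ ∏ i, (1 + S x) ^ (e i) := by
        apply Finset.prod_le_prod (fun i _ => by positivity)
        intro i _
        apply pow_le_pow_left₀ (norm_nonneg _)
        calc ‖f i x‖ ≤ S x := Finset.single_le_sum (f := fun i => ‖f i x‖)
              (fun i _ => norm_nonneg _) (Finset.mem_univ i)
          _ ≤ 1 + S x := by linarith
    _ = (1 + S x) ^ (∑ i, e i) := by rw [← Finset.prod_pow_eq_pow_sum]
    _ ≤ (1 + S x) ^ n := by
        apply pow_le_pow_right₀ (by linarith [hSnn x]) he

theorem stmt9_expandInt {Ω : Type*} [MeasurableSpace Ω] {μ : Measure Ω}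
    (m n' : ℕ) (u v R : Ω → ℂ)
    (hint : ∀ p ≤ m, ∀ q ≤ n', Integrable
      (fun x => u x ^ (m-p) * v x ^ p * (starRingEnd ℂ) (u x) ^ (n'-q) *
        (starRingEnd ℂ) (v x) ^ q * R x) μ)
    (a : ℂ) :
    ∫ x, (u x + a * v x) ^ m * (starRingEnd ℂ) (u x + a * v x) ^ n' * R x ∂μ
      = ∑ p ∈ Finset.range (m+1), ∑ q ∈ Finset.range (n'+1),
        ((m.choose p : ℂ) * (n'.choose q : ℂ) * a ^ p * (starRingEnd ℂ) a ^ q) *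
          ∫ x, u x ^ (m-p) * v x ^ p * (starRingEnd ℂ) (u x) ^ (n'-q) *
            (starRingEnd ℂ) (v x) ^ q * R x ∂μ := by
  have hpt : ∀ x, (u x + a * v x) ^ m * (starRingEnd ℂ) (u x + a * v x) ^ n' * R x
      = ∑ p ∈ Finset.range (m+1), ∑ q ∈ Finset.range (n'+1),
        ((m.choose p : ℂ) * (n'.choose q : ℂ) * a ^ p * (starRingEnd ℂ) a ^ q) *
          (u x ^ (m-p) * v x ^ p * (starRingEnd ℂ) (u x) ^ (n'-q) *
            (starRingEnd ℂ) (v x) ^ q * R x) := by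
    intro x
    rw [map_add, map_mul, stmt9_add_pow_rev, stmt9_add_pow_rev, Finset.sum_mul_sum,
      Finset.sum_mul]
    apply Finset.sum_congr rfl; intro p _
    rw [Finset.sum_mul]
    apply Finset.sum_congr rfl; intro q _
    ring
  have hcong : ∫ x, (u x + a * v x) ^ m * (starRingEnd ℂ) (u x + a * v x) ^ n' * R x ∂μ
      = ∫ x, ∑ p ∈ Finset.range (m+1), ∑ q ∈ Finset.range (n'+1),
        ((m.choose p : ℂ) * (n'.choose q : ℂ) * a ^ p * (starRingEnd ℂ) a ^ q) *
          (u x ^ (m-p) * v x ^ p * (starRingEnd ℂ) (u x) ^ (n'-q) *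
            (starRingEnd ℂ) (v x) ^ q * R x) ∂μ :=
    integral_congr_ae (Filter.Eventually.of_forall hpt)
  rw [hcong, integral_finset_sum]
  · apply Finset.sum_congr rfl; intro p hp
    rw [Finset.mem_range] at hp
    rw [integral_finset_sum]
    · apply Finset.sum_congr rfl; intro q hq
      exact integral_const_mul _ _
    · intro q hq
      rw [Finset.mem_range] at hq
      exact (hint p (by omega) q (by omega)).const_mul _
  · intro p hp
    rw [Finset.mem_range] at hp
    apply integrable_finset_sum
    intro q hq
    rw [Finset.mem_range] at hq
    exact (hint p (by omega) q (by omega)).const_mul _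

theorem stmt9_coeff_vanish {Ω : Type*} [MeasurableSpace Ω] {μ : Measure Ω}
    (m n' : ℕ) (u v R : Ω → ℂ)
    (hint : ∀ p ≤ m, ∀ q ≤ n', Integrable
      (fun x => u x ^ (m-p) * v x ^ p * (starRingEnd ℂ) (u x) ^ (n'-q) *
        (starRingEnd ℂ) (v x) ^ q * R x) μ)
    (h0 : ∀ a : ℂ, ∫ x, (u x + a * v x) ^ m *
        (starRingEnd ℂ) (u x + a * v x) ^ n' * R x ∂μ = 0) :
    ∀ p ≤ m, ∀ q ≤ n', ∫ x, u x ^ (m-p) * v x ^ p *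
      (starRingEnd ℂ) (u x) ^ (n'-q) * (starRingEnd ℂ) (v x) ^ q * R x ∂μ = 0 := by
  set N := m + n' + 1 with hN
  set c : ℕ → ℕ → ℂ := fun p q => if p ≤ m ∧ q ≤ n' then
      ((m.choose p : ℂ) * (n'.choose q : ℂ)) *
        ∫ x, u x ^ (m-p) * v x ^ p * (starRingEnd ℂ) (u x) ^ (n'-q) *
          (starRingEnd ℂ) (v x) ^ q * R x ∂μ else 0 with hc
  have hz : ∀ z : ℂ, ∑ i ∈ Finset.range N, ∑ j ∈ Finset.range N,
      c i j * z ^ i * (starRingEnd ℂ) z ^ j = 0 := by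
    intro z
    have hsub : ∀ i, ∑ j ∈ Finset.range N, c i j * z ^ i * (starRingEnd ℂ) z ^ j
        = ∑ j ∈ Finset.range (n'+1), c i j * z ^ i * (starRingEnd ℂ) z ^ j := by
      intro i
      refine (Finset.sum_subset (Finset.range_subset_range.mpr (by omega)) ?_).symm
      intro j _ hj
      rw [Finset.mem_range, not_lt] at hj
      simp only [hc]
      rw [if_neg (by omega)]
      ring
    have hsub2 : ∑ i ∈ Finset.range N, ∑ j ∈ Finset.range (n'+1),
        c i j * z ^ i * (starRingEnd ℂ) z ^ j
        = ∑ i ∈ Finset.range (m+1), ∑ j ∈ Finset.range (n'+1),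
          c i j * z ^ i * (starRingEnd ℂ) z ^ j := by
      refine (Finset.sum_subset (Finset.range_subset_range.mpr (by omega)) ?_).symm
      intro i _ hi
      rw [Finset.mem_range, not_lt] at hi
      apply Finset.sum_eq_zero
      intro j _
      simp only [hc]
      rw [if_neg (by omega)]
      ring
    simp only [hsub]
    rw [hsub2]
    rw [← h0 z, stmt9_expandInt m n' u v R hint z]
    apply Finset.sum_congr rfl; intro p hp
    rw [Finset.mem_range] at hp
    apply Finset.sum_congr rfl; intro q hq
    rw [Finset.mem_range] at hq
    simp only [hc]
    rw [if_pos ⟨by omega, by omega⟩]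
    ring
  intro p hp q hq
  have h5 := stmt9_vanish_bi c hz p (by omega) q (by omega)
  simp only [hc] at h5
  rw [if_pos (show p ≤ m ∧ q ≤ n' from ⟨hp, hq⟩)] at h5
  have hcp : ((m.choose p : ℂ)) ≠ 0 := Nat.cast_ne_zero.mpr (Nat.choose_pos hp).ne'
  have hcq : ((n'.choose q : ℂ)) ≠ 0 := Nat.cast_ne_zero.mpr (Nat.choose_pos hq).ne'
  rcases mul_eq_zero.mp h5 with h | h
  · exact absurd h (mul_ne_zero hcp hcq)
  · exact h

theorem stmt9_firstorder {Ω : Type*} [MeasurableSpace Ω] (μ : Measure Ω)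
    [IsProbabilityMeasure μ] (k : ℕ)
    [Fact (1 ≤ ((2 * k + 2 : ℕ) : ℝ≥0∞))]
    (W H : Lp ℂ ((2 * k + 2 : ℕ) : ℝ≥0∞) μ)
    (hmin : ∀ c : ℂ, ‖W‖ ≤ ‖W + c • H‖)
    (hint : ∀ p ≤ k+1, ∀ q ≤ k+1, Integrable
      (fun x => W x ^ (k+1-p) * H x ^ p * (starRingEnd ℂ) (W x) ^ (k+1-q) *
        (starRingEnd ℂ) (H x) ^ q * (1:ℂ)) μ) :
    ∫ x, (W x) ^ (k+1) * (starRingEnd ℂ) (W x) ^ k * (starRingEnd ℂ) (H x) ∂μ = 0 := by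
  have hp0 : (((2 * k + 2 : ℕ) : ℕ) : ℝ≥0∞) ≠ 0 := by simp
  have hpt : (((2 * k + 2 : ℕ) : ℕ) : ℝ≥0∞) ≠ ∞ := ENNReal.natCast_ne_top _
  have normEq : ∀ u : Lp ℂ ((2 * k + 2 : ℕ) : ℝ≥0∞) μ,
      ‖u‖ = (∫ x, ‖u x‖ ^ ((2 * k + 2 : ℕ) : ℝ) ∂μ) ^ (((2 * k + 2 : ℕ) : ℝ)⁻¹) := by
    intro u
    rw [Lp.norm_def, (Lp.memLp u).eLpNorm_eq_integral_rpow_norm hp0 hpt]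
    rw [ENNReal.toReal_ofReal (by positivity)]
    rw [ENNReal.toReal_natCast]
  have hnRne : ((2 * k + 2 : ℕ) : ℝ) ≠ 0 := by positivity
  have hIneq : ∀ c : ℂ, ∫ x, ‖W x‖ ^ ((2 * k + 2 : ℕ) : ℝ) ∂μ
      ≤ ∫ x, ‖(W + c • H) x‖ ^ ((2 * k + 2 : ℕ) : ℝ) ∂μ := by
    intro c
    have h1 := hmin c
    rw [normEq W, normEq (W + c • H)] at h1
    have hA : (0:ℝ) ≤ ∫ x, ‖W x‖ ^ ((2 * k + 2 : ℕ) : ℝ) ∂μ :=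
      integral_nonneg fun x => Real.rpow_nonneg (norm_nonneg _) _
    have hB : (0:ℝ) ≤ ∫ x, ‖(W + c • H) x‖ ^ ((2 * k + 2 : ℕ) : ℝ) ∂μ :=
      integral_nonneg fun x => Real.rpow_nonneg (norm_nonneg _) _
    calc ∫ x, ‖W x‖ ^ ((2 * k + 2 : ℕ) : ℝ) ∂μ
        = ((∫ x, ‖W x‖ ^ ((2 * k + 2 : ℕ) : ℝ) ∂μ) ^ (((2 * k + 2 : ℕ):ℝ)⁻¹)) ^ ((2 * k + 2 : ℕ):ℝ) := by
          rw [← Real.rpow_mul hA, inv_mul_cancel₀ hnRne, Real.rpow_one]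
      _ ≤ ((∫ x, ‖(W + c • H) x‖ ^ ((2 * k + 2 : ℕ) : ℝ) ∂μ) ^ (((2 * k + 2 : ℕ):ℝ)⁻¹)) ^ ((2 * k + 2 : ℕ):ℝ) :=
          Real.rpow_le_rpow (Real.rpow_nonneg hA _) h1 (by positivity)
      _ = ∫ x, ‖(W + c • H) x‖ ^ ((2 * k + 2 : ℕ) : ℝ) ∂μ := by
          rw [← Real.rpow_mul hB, inv_mul_cancel₀ hnRne, Real.rpow_one]
  have hptw : ∀ z : ℂ, z ^ (k+1) * (starRingEnd ℂ) z ^ (k+1)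
      = ((‖z‖ ^ ((2 * k + 2 : ℕ):ℝ) : ℝ) : ℂ) := by
    intro z
    rw [← mul_pow, Complex.mul_conj, ← Complex.ofReal_pow]
    congr 1
    have h2 : Complex.normSq z = ‖z‖ ^ 2 := by
      rw [Complex.normSq_eq_norm_sq]
    rw [h2, Real.rpow_natCast, ← pow_mul]
    congr 1 <;> omega
  have hJ : ∀ u : Lp ℂ ((2 * k + 2 : ℕ) : ℝ≥0∞) μ,
      (∫ x, (u x) ^ (k+1) * (starRingEnd ℂ) (u x) ^ (k+1) ∂μ)
        = ((∫ x, ‖u x‖ ^ ((2 * k + 2 : ℕ):ℝ) ∂μ : ℝ) : ℂ) := by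
    intro u
    rw [show (fun x => (u x) ^ (k+1) * (starRingEnd ℂ) (u x) ^ (k+1))
        = fun x => ((‖u x‖ ^ ((2 * k + 2 : ℕ):ℝ) : ℝ) : ℂ) from funext fun x => hptw (u x)]
    exact integral_ofReal
  -- coefficients of the expansion
  set T : ℕ × ℕ → ℂ := fun pq => (((k+1).choose pq.1 : ℂ) * ((k+1).choose pq.2 : ℂ)) *
    ∫ x, W x ^ (k+1-pq.1) * H x ^ pq.1 * (starRingEnd ℂ) (W x) ^ (k+1-pq.2) *
      (starRingEnd ℂ) (H x) ^ pq.2 * (1:ℂ) ∂μ with hT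
  set s : Finset (ℕ × ℕ) := Finset.range (k+1+1) ×ˢ Finset.range (k+1+1) with hs
  set S : ℂ → ℂ := fun c => ∑ pq ∈ s, T pq * c ^ pq.1 * (starRingEnd ℂ) c ^ pq.2 with hSdef
  have hae : ∀ c : ℂ, (⇑(W + c • H) : Ω → ℂ) =ᵐ[μ] fun x => W x + c * H x := by
    intro c
    filter_upwards [Lp.coeFn_add W (c • H), Lp.coeFn_smul c H] with x h1 h2
    rw [h1]
    simp [h2]
  have hSval : ∀ c : ℂ, ((∫ x, ‖(W + c • H) x‖ ^ ((2 * k + 2 : ℕ):ℝ) ∂μ : ℝ) : ℂ) = S c := by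
    intro c
    rw [← hJ (W + c • H)]
    have e1 : ∫ x, ((W + c • H) x) ^ (k+1) * (starRingEnd ℂ) ((W + c • H) x) ^ (k+1) ∂μ
        = ∫ x, (W x + c * H x) ^ (k+1) * (starRingEnd ℂ) (W x + c * H x) ^ (k+1) * (1:ℂ) ∂μ := by
      apply integral_congr_ae
      filter_upwards [hae c] with x hx
      rw [hx]
      ring
    rw [e1, stmt9_expandInt (k+1) (k+1) (⇑W) (⇑H) (fun _ => (1:ℂ)) hint c]
    rw [← Finset.sum_product']
    rw [hSdef]
    simp only []
    apply Finset.sum_congr rfl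
    intro pq _
    rw [hT]
    ring
  have hre : ∀ c : ℂ, (S 0).re ≤ (S c).re := by
    intro c
    rw [← hSval 0, ← hSval c]
    simp only [Complex.ofReal_re]
    have h0 : W + (0:ℂ) • H = W := by rw [zero_smul, add_zero]
    rw [h0]
    exact hIneq c
  -- first-order condition in every direction
  have hkey : ∀ w' : ℂ, 0 ≤ (T (1,0) * w' + T (0,1) * (starRingEnd ℂ) w').re := by
    intro w'
    set qf : ℝ → ℂ := fun t => ∑ pq ∈ s.erase (0,0),
      T pq * w' ^ pq.1 * (starRingEnd ℂ) w' ^ pq.2 * ((t:ℝ):ℂ) ^ (pq.1 + pq.2 - 1) with hqf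
    have hdiff : ∀ t : ℝ, S ((t:ℂ) * w') - S 0 = (t:ℂ) * qf t := by
      intro t
      rw [hSdef]
      simp only []
      rw [← Finset.sum_sub_distrib]
      rw [← Finset.sum_erase (s := s) (f := fun pq =>
          T pq * ((t:ℂ) * w') ^ pq.1 * (starRingEnd ℂ) ((t:ℂ) * w') ^ pq.2
            - T pq * (0:ℂ) ^ pq.1 * (starRingEnd ℂ) (0:ℂ) ^ pq.2)
        (a := ((0:ℕ),(0:ℕ))) (by simp)]
      rw [hqf, Finset.mul_sum]
      apply Finset.sum_congr rfl
      intro pq hpq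
      have hne : pq ≠ (0,0) := (Finset.mem_erase.mp hpq).1
      have hge : 1 ≤ pq.1 + pq.2 := by
        rcases pq with ⟨p, q⟩
        have : ¬(p = 0 ∧ q = 0) := by
          intro hc
          exact hne (by simp [hc.1, hc.2])
        omega
      have hz0 : T pq * (0:ℂ) ^ pq.1 * (starRingEnd ℂ) (0:ℂ) ^ pq.2 = 0 := by
        rw [map_zero]
        rcases Nat.eq_zero_or_pos pq.1 with h | h
        · rcases Nat.eq_zero_or_pos pq.2 with h' | h'
          · exact absurd (Prod.ext_iff.mpr ⟨h, h'⟩) hne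
          · rw [zero_pow (show pq.2 ≠ 0 by omega)]; ring
        · rw [zero_pow (show pq.1 ≠ 0 by omega)]; ring
      rw [hz0, sub_zero]
      have h3 : ((t:ℂ)) ^ pq.1 * ((t:ℂ)) ^ pq.2 = (t:ℂ) * ((t:ℂ)) ^ (pq.1 + pq.2 - 1) := by
        rw [← pow_add]
        conv_lhs => rw [show pq.1 + pq.2 = (pq.1 + pq.2 - 1) + 1 from by omega]
        rw [pow_succ]; ring
      rw [map_mul, Complex.conj_ofReal, mul_pow, mul_pow]
      linear_combination (T pq * w' ^ pq.1 * (starRingEnd ℂ) w' ^ pq.2) * h3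
    have hq0 : qf 0 = T (1,0) * w' + T (0,1) * (starRingEnd ℂ) w' := by
      rw [hqf]
      simp only []
      rw [← Finset.sum_subset (s₁ := ({(1,0),(0,1)} : Finset (ℕ×ℕ)))
        (h := ?_) (hf := ?_)]
      · rw [Finset.sum_insert (by decide), Finset.sum_singleton]
        norm_num
      · intro pq hpq
        simp only [Finset.mem_insert, Finset.mem_singleton] at hpq
        rcases hpq with rfl | rfl <;>
          simp [hs, Finset.mem_erase, Finset.mem_product] <;> omega
      · intro pq hpq hnotin
        have hne : pq ≠ (0,0) := (Finset.mem_erase.mp hpq).1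
        simp only [Finset.mem_insert, Finset.mem_singleton] at hnotin
        push_neg at hnotin
        have h2 : 2 ≤ pq.1 + pq.2 := by
          rcases pq with ⟨p, q⟩
          have e1 : ¬(p = 0 ∧ q = 0) := fun hc => hne (by simp [hc.1, hc.2])
          have e2 : ¬(p = 1 ∧ q = 0) := fun hc => hnotin.1 (by simp [hc.1, hc.2])
          have e3 : ¬(p = 0 ∧ q = 1) := fun hc => hnotin.2 (by simp [hc.1, hc.2])
          omega
        rw [Complex.ofReal_zero, zero_pow (by omega), mul_zero]
    have hcont : Continuous fun t : ℝ => (qf t).re := by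
      apply Complex.continuous_re.comp
      rw [hqf]
      apply continuous_finset_sum
      intro pq _
      exact continuous_const.mul (Complex.continuous_ofReal.pow _)
    have hqpos : ∀ t : ℝ, 0 < t → 0 ≤ (qf t).re := by
      intro t ht
      have h1 := hre ((t:ℂ) * w')
      have h2 : 0 ≤ (S ((t:ℂ)*w') - S 0).re := by rw [Complex.sub_re]; linarith
      rw [hdiff t] at h2
      have h3 : ((t:ℂ) * qf t).re = t * (qf t).re := by
        simp [Complex.mul_re]
      rw [h3] at h2
      nlinarith
    have hlim : 0 ≤ (qf 0).re := by
      have htend : Filter.Tendsto (fun t : ℝ => (qf t).re)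
          (nhdsWithin 0 (Set.Ioi 0)) (nhds ((qf 0).re)) :=
        (hcont.tendsto 0).mono_left nhdsWithin_le_nhds
      refine ge_of_tendsto htend ?_
      filter_upwards [self_mem_nhdsWithin] with t ht
      exact hqpos t ht
    rw [hq0] at hlim
    exact hlim
  have hconjT : T (1,0) = (starRingEnd ℂ) (T (0,1)) := by
    rw [hT]
    simp only []
    rw [map_mul, map_mul, ← integral_conj]
    have e2 : ∫ x, (starRingEnd ℂ) (W x ^ (k+1-(0:ℕ)) * H x ^ (0:ℕ) *
          (starRingEnd ℂ) (W x) ^ (k+1-(1:ℕ)) * (starRingEnd ℂ) (H x) ^ (1:ℕ) * (1:ℂ)) ∂μ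
        = ∫ x, W x ^ (k+1-(1:ℕ)) * H x ^ (1:ℕ) * (starRingEnd ℂ) (W x) ^ (k+1-(0:ℕ)) *
          (starRingEnd ℂ) (H x) ^ (0:ℕ) * (1:ℂ) ∂μ := by
      apply integral_congr_ae
      apply Filter.Eventually.of_forall
      intro x
      simp only [map_mul, map_pow, Complex.conj_conj, map_one]
      ring
    rw [e2]
    simp only [Complex.conj_natCast]
    ring
  have hz := hkey (-(T (0,1)))
  have h8 : T (1,0) * (-(T (0,1))) + T (0,1) * (starRingEnd ℂ) (-(T (0,1)))
      = ((-2 * Complex.normSq (T (0,1)) : ℝ) : ℂ) := by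
    rw [hconjT, map_neg]
    have e3 : (starRingEnd ℂ) (T (0,1)) * (-(T (0,1))) +
        T (0,1) * -((starRingEnd ℂ) (T (0,1)))
        = -2 * (T (0,1) * (starRingEnd ℂ) (T (0,1))) := by ring
    rw [e3, Complex.mul_conj]
    push_cast
    ring
  rw [h8] at hz
  rw [Complex.ofReal_re] at hz
  have h9 : Complex.normSq (T (0,1)) = 0 := le_antisymm (by nlinarith) (Complex.normSq_nonneg _)
  have h10 : T (0,1) = 0 := Complex.normSq_eq_zero.mp h9
  rw [hT] at h10
  simp only [Nat.choose_zero_right, Nat.choose_one_right, Nat.cast_one, Nat.cast_add,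
    one_mul] at h10
  have h11 : ((k:ℂ) + 1) ≠ 0 := by
    have h' : ((k+1 : ℕ) : ℂ) ≠ 0 := Nat.cast_ne_zero.mpr (Nat.succ_ne_zero k)
    push_cast at h'
    exact h'
  have h12 : ∫ x, W x ^ (k+1-(0:ℕ)) * H x ^ (0:ℕ) * (starRingEnd ℂ) (W x) ^ (k+1-(1:ℕ)) *
      (starRingEnd ℂ) (H x) ^ (1:ℕ) * (1:ℂ) ∂μ = 0 := by
    rcases mul_eq_zero.mp h10 with h | h
    · exact absurd h h11
    · exact h
  rw [show (fun x => W x ^ (k+1) * (starRingEnd ℂ) (W x) ^ k * (starRingEnd ℂ) (H x))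
      = fun x => W x ^ (k+1-(0:ℕ)) * H x ^ (0:ℕ) * (starRingEnd ℂ) (W x) ^ (k+1-(1:ℕ)) *
        (starRingEnd ℂ) (H x) ^ (1:ℕ) * (1:ℂ) from funext fun x => by
      simp only [Nat.sub_zero, Nat.add_sub_cancel, pow_zero, pow_one, mul_one]]
  exact h12

theorem stmt9_int7 {Ω : Type*} [MeasurableSpace Ω] {μ : Measure Ω}
    [IsProbabilityMeasure μ] (n : ℕ) (hn : n ≠ 0)
    (f1 f2 f3 f4 f5 f6 f7 : Ω → ℂ)
    (h1 : MemLp f1 ((n : ℕ) : ℝ≥0∞) μ) (h2 : MemLp f2 ((n : ℕ) : ℝ≥0∞) μ)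
    (h3 : MemLp f3 ((n : ℕ) : ℝ≥0∞) μ) (h4 : MemLp f4 ((n : ℕ) : ℝ≥0∞) μ)
    (h5 : MemLp f5 ((n : ℕ) : ℝ≥0∞) μ) (h6 : MemLp f6 ((n : ℕ) : ℝ≥0∞) μ)
    (h7 : MemLp f7 ((n : ℕ) : ℝ≥0∞) μ)
    (e1 e2 e3 e4 e5 e6 e7 : ℕ) (he : e1+e2+e3+e4+e5+e6+e7 ≤ n) :
    Integrable (fun x => f1 x ^ e1 * f2 x ^ e2 * f3 x ^ e3 * f4 x ^ e4 *
      f5 x ^ e5 * f6 x ^ e6 * f7 x ^ e7) μ := by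
  have key := stmt9_integrable_monomial (μ := μ) hn ![f1,f2,f3,f4,f5,f6,f7]
    (by intro i; fin_cases i <;> assumption) ![e1,e2,e3,e4,e5,e6,e7]
    (by rw [Fin.sum_univ_seven]; simpa using he)
  apply key.congr
  apply Filter.Eventually.of_forall
  intro x
  simp only [Fin.prod_univ_succ, Fin.prod_univ_zero, Matrix.cons_val_zero,
    Matrix.cons_val_succ, mul_one]
  ring

/-- Let `p = 2k+2` with `k ≥ 1`, `X` a closed subspace of `L^p(μ)` containing the constants,
and `P` a contractive projection on `X` with `P1 = 1`. Then for all `g₁, g₂, g₃` in the range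
of `P` and all `f ∈ X`, `∫ g₁ g₂ conj(g₃) conj(f - Pf) dμ = 0`. -/
theorem stmt9 {Ω : Type*} {m0 : MeasurableSpace Ω} (μ : Measure Ω) [IsProbabilityMeasure μ]
    (k : ℕ) (hk : 1 ≤ k) [Fact (1 ≤ ((2 * k + 2 : ℕ) : ℝ≥0∞))]
    (X : Submodule ℂ (Lp ℂ ((2 * k + 2 : ℕ) : ℝ≥0∞) μ))
    (hX : IsClosed (X : Set (Lp ℂ ((2 * k + 2 : ℕ) : ℝ≥0∞) μ)))
    (hconst : ∀ c : ℂ, ∃ u : X, ⇑((u : X) : Lp ℂ ((2 * k + 2 : ℕ) : ℝ≥0∞) μ) =ᵐ[μ] fun _ => c)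
    (P : X →L[ℂ] X) (hproj : ∀ x : X, P (P x) = P x) (hP : ‖P‖ ≤ 1)
    (o : X) (ho : ⇑((o : X) : Lp ℂ ((2 * k + 2 : ℕ) : ℝ≥0∞) μ) =ᵐ[μ] fun _ => (1 : ℂ))
    (hPo : P o = o) :
    ∀ g₁ g₂ g₃ f : X,
      ∫ x, (((P g₁ : X) : Lp ℂ ((2 * k + 2 : ℕ) : ℝ≥0∞) μ) x) *
          (((P g₂ : X) : Lp ℂ ((2 * k + 2 : ℕ) : ℝ≥0∞) μ) x) *
          (starRingEnd ℂ) (((P g₃ : X) : Lp ℂ ((2 * k + 2 : ℕ) : ℝ≥0∞) μ) x) *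
          (starRingEnd ℂ) (((f - P f : X) : Lp ℂ ((2 * k + 2 : ℕ) : ℝ≥0∞) μ) x) ∂μ = 0 := by
  intro g₁ g₂ g₃ f
  have hn0 : (2 * k + 2 : ℕ) ≠ 0 := by omega
  set h : X := f - P f with hhdef
  have hPh : P h = 0 := by
    rw [hhdef, map_sub, hproj f, sub_self]
  have hmem : ∀ w : X, MemLp (⇑((w : X) : Lp ℂ ((2 * k + 2 : ℕ) : ℝ≥0∞) μ))
      ((2 * k + 2 : ℕ) : ℝ≥0∞) μ := fun w => Lp.memLp _
  have hcoe : ∀ (u w : X) (a : ℂ),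
      (⇑(((u + a • w : X) : Lp ℂ ((2 * k + 2 : ℕ) : ℝ≥0∞) μ)) : Ω → ℂ)
        =ᵐ[μ] fun x => ((u : X) : Lp ℂ ((2 * k + 2 : ℕ) : ℝ≥0∞) μ) x
          + a * ((w : X) : Lp ℂ ((2 * k + 2 : ℕ) : ℝ≥0∞) μ) x := by
    intro u w a
    have e0 : ((u + a • w : X) : Lp ℂ ((2 * k + 2 : ℕ) : ℝ≥0∞) μ)
        = ((u : X) : Lp ℂ ((2 * k + 2 : ℕ) : ℝ≥0∞) μ)
          + a • ((w : X) : Lp ℂ ((2 * k + 2 : ℕ) : ℝ≥0∞) μ) := rfl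
    rw [e0]
    filter_upwards [Lp.coeFn_add ((u : X) : Lp ℂ ((2 * k + 2 : ℕ) : ℝ≥0∞) μ)
      (a • ((w : X) : Lp ℂ ((2 * k + 2 : ℕ) : ℝ≥0∞) μ)),
      Lp.coeFn_smul a ((w : X) : Lp ℂ ((2 * k + 2 : ℕ) : ℝ≥0∞) μ)] with x h1 h2
    rw [h1]
    simp [h2]
  have hfix : ∀ w : X, P w = w → ∀ c : ℂ,
      ‖((w : X) : Lp ℂ ((2 * k + 2 : ℕ) : ℝ≥0∞) μ)‖
        ≤ ‖((w : X) : Lp ℂ ((2 * k + 2 : ℕ) : ℝ≥0∞) μ)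
            + c • ((h : X) : Lp ℂ ((2 * k + 2 : ℕ) : ℝ≥0∞) μ)‖ := by
    intro w hw c
    have e0 : ((w + c • h : X) : Lp ℂ ((2 * k + 2 : ℕ) : ℝ≥0∞) μ)
        = ((w : X) : Lp ℂ ((2 * k + 2 : ℕ) : ℝ≥0∞) μ)
          + c • ((h : X) : Lp ℂ ((2 * k + 2 : ℕ) : ℝ≥0∞) μ) := rfl
    rw [← e0]
    have e1 : P (w + c • h) = w := by
      rw [map_add, _root_.map_smul, hw, hPh, smul_zero, add_zero]
    calc ‖((w : X) : Lp ℂ ((2 * k + 2 : ℕ) : ℝ≥0∞) μ)‖ = ‖w‖ := rfl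
      _ = ‖P (w + c • h)‖ := by rw [e1]
      _ ≤ ‖P‖ * ‖w + c • h‖ := P.le_opNorm _
      _ ≤ 1 * ‖w + c • h‖ := mul_le_mul_of_nonneg_right hP (norm_nonneg _)
      _ = ‖w + c • h‖ := one_mul _
      _ = ‖((w + c • h : X) : Lp ℂ ((2 * k + 2 : ℕ) : ℝ≥0∞) μ)‖ := rfl
  -- the first-order orthogonality relation
  have hD : ∀ w : X, P w = w →
      ∫ x, (((w : X) : Lp ℂ ((2 * k + 2 : ℕ) : ℝ≥0∞) μ) x) ^ (k+1)
        * (starRingEnd ℂ) (((w : X) : Lp ℂ ((2 * k + 2 : ℕ) : ℝ≥0∞) μ) x) ^ k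
        * (starRingEnd ℂ) (((h : X) : Lp ℂ ((2 * k + 2 : ℕ) : ℝ≥0∞) μ) x) ∂μ = 0 := by
    intro w hw
    apply stmt9_firstorder μ k _ _ (hfix w hw)
    intro p hp q hq
    apply Integrable.congr (stmt9_int7 (2*k+2) hn0 _ _ _ _ _ _ _
      (hmem w) (hmem h) (stmt9_memLp_conj (hmem w)) (stmt9_memLp_conj (hmem h))
      (memLp_const 1) (memLp_const 1) (memLp_const 1)
      (k+1-p) p (k+1-q) q 0 0 0 (by omega))
    apply Filter.Eventually.of_forall
    intro x
    simp only [pow_zero, mul_one]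
  -- round 1
  have hr1 : ∀ u w : X, P u = u → P w = w →
      ∫ x, (((u : X) : Lp ℂ ((2 * k + 2 : ℕ) : ℝ≥0∞) μ) x) ^ (k+1-(0:ℕ))
        * (((w : X) : Lp ℂ ((2 * k + 2 : ℕ) : ℝ≥0∞) μ) x) ^ (0:ℕ)
        * (starRingEnd ℂ) (((u : X) : Lp ℂ ((2 * k + 2 : ℕ) : ℝ≥0∞) μ) x) ^ (k-(1:ℕ))
        * (starRingEnd ℂ) (((w : X) : Lp ℂ ((2 * k + 2 : ℕ) : ℝ≥0∞) μ) x) ^ (1:ℕ)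
        * (starRingEnd ℂ) (((h : X) : Lp ℂ ((2 * k + 2 : ℕ) : ℝ≥0∞) μ) x) ∂μ = 0 := by
    intro u w hu hw
    refine stmt9_coeff_vanish (k+1) k _ _ _ ?_ ?_ 0 (by omega) 1 (by omega)
    · intro p hp q hq
      apply Integrable.congr (stmt9_int7 (2*k+2) hn0 _ _ _ _ _ _ _
        (hmem u) (hmem w) (stmt9_memLp_conj (hmem u)) (stmt9_memLp_conj (hmem w))
        (stmt9_memLp_conj (hmem h)) (memLp_const 1) (memLp_const 1)
        (k+1-p) p (k-q) q 1 0 0 (by omega))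
      apply Filter.Eventually.of_forall
      intro x
      simp only [pow_zero, pow_one, mul_one]
    · intro a
      refine Eq.trans (integral_congr_ae ?_) (hD (u + a • w)
        (by rw [map_add, _root_.map_smul, hu, hw]))
      filter_upwards [hcoe u w a] with x hx
      rw [hx]
  -- round 2
  have hr2 : ∀ u w1 w3 : X, P u = u → P w1 = w1 → P w3 = w3 →
      ∫ x, (((u : X) : Lp ℂ ((2 * k + 2 : ℕ) : ℝ≥0∞) μ) x) ^ (k+1-(1:ℕ))
        * (((w1 : X) : Lp ℂ ((2 * k + 2 : ℕ) : ℝ≥0∞) μ) x) ^ (1:ℕ)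
        * (starRingEnd ℂ) (((u : X) : Lp ℂ ((2 * k + 2 : ℕ) : ℝ≥0∞) μ) x) ^ (k-1-(0:ℕ))
        * (starRingEnd ℂ) (((w1 : X) : Lp ℂ ((2 * k + 2 : ℕ) : ℝ≥0∞) μ) x) ^ (0:ℕ)
        * ((starRingEnd ℂ) (((w3 : X) : Lp ℂ ((2 * k + 2 : ℕ) : ℝ≥0∞) μ) x)
            * (starRingEnd ℂ) (((h : X) : Lp ℂ ((2 * k + 2 : ℕ) : ℝ≥0∞) μ) x)) ∂μ = 0 := by
    intro u w1 w3 hu h1 h3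
    refine stmt9_coeff_vanish (k+1) (k-1) _ _ _ ?_ ?_ 1 (by omega) 0 (by omega)
    · intro p hp q hq
      apply Integrable.congr (stmt9_int7 (2*k+2) hn0 _ _ _ _ _ _ _
        (hmem u) (hmem w1) (stmt9_memLp_conj (hmem u)) (stmt9_memLp_conj (hmem w1))
        (stmt9_memLp_conj (hmem w3)) (stmt9_memLp_conj (hmem h)) (memLp_const 1)
        (k+1-p) p (k-1-q) q 1 1 0 (by omega))
      apply Filter.Eventually.of_forall
      intro x
      simp only [pow_zero, pow_one, mul_one]
      ring
    · intro a
      refine Eq.trans (integral_congr_ae ?_) (hr1 (u + a • w1) w3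
        (by rw [map_add, _root_.map_smul, hu, h1]) h3)
      filter_upwards [hcoe u w1 a] with x hx
      rw [hx]
      simp only [Nat.sub_zero, pow_zero, pow_one, mul_one]
      ring
  -- round 3
  have hr3 : ∀ u w1 w2 w3 : X, P u = u → P w1 = w1 → P w2 = w2 → P w3 = w3 →
      ∫ x, (((u : X) : Lp ℂ ((2 * k + 2 : ℕ) : ℝ≥0∞) μ) x) ^ (k-(1:ℕ))
        * (((w2 : X) : Lp ℂ ((2 * k + 2 : ℕ) : ℝ≥0∞) μ) x) ^ (1:ℕ)
        * (starRingEnd ℂ) (((u : X) : Lp ℂ ((2 * k + 2 : ℕ) : ℝ≥0∞) μ) x) ^ (k-1-(0:ℕ))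
        * (starRingEnd ℂ) (((w2 : X) : Lp ℂ ((2 * k + 2 : ℕ) : ℝ≥0∞) μ) x) ^ (0:ℕ)
        * ((((w1 : X) : Lp ℂ ((2 * k + 2 : ℕ) : ℝ≥0∞) μ) x)
            * (starRingEnd ℂ) (((w3 : X) : Lp ℂ ((2 * k + 2 : ℕ) : ℝ≥0∞) μ) x)
            * (starRingEnd ℂ) (((h : X) : Lp ℂ ((2 * k + 2 : ℕ) : ℝ≥0∞) μ) x)) ∂μ = 0 := by
    intro u w1 w2 w3 hu h1 h2 h3
    refine stmt9_coeff_vanish k (k-1) _ _ _ ?_ ?_ 1 (by omega) 0 (by omega)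
    · intro p hp q hq
      apply Integrable.congr (stmt9_int7 (2*k+2) hn0 _ _ _ _ _ _ _
        (hmem u) (hmem w2) (stmt9_memLp_conj (hmem u)) (stmt9_memLp_conj (hmem w2))
        (hmem w1) (stmt9_memLp_conj (hmem w3)) (stmt9_memLp_conj (hmem h))
        (k-p) p (k-1-q) q 1 1 1 (by omega))
      apply Filter.Eventually.of_forall
      intro x
      simp only [pow_zero, pow_one, mul_one]
      ring
    · intro a
      refine Eq.trans (integral_congr_ae ?_) (hr2 (u + a • w2) w1 w3
        (by rw [map_add, _root_.map_smul, hu, h2]) h1 h3)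
      filter_upwards [hcoe u w2 a] with x hx
      rw [hx]
      simp only [Nat.add_sub_cancel, Nat.sub_zero, pow_zero, pow_one, mul_one]
      ring
  -- conclude with u = o
  refine Eq.trans (integral_congr_ae ?_) (hr3 o (P g₁) (P g₂) (P g₃)
    hPo (hproj g₁) (hproj g₂) (hproj g₃))
  filter_upwards [ho] with x hx
  rw [hx]
  simp only [one_pow, map_one, pow_zero, pow_one, mul_one, one_mul]
  ring
end

section
/- Let p = 2k + 2 with k ≥ 1, X a closed subspace of L^p(μ) containing the constants, M(X) = {h ∈ X : hf ∈ X for all f ∈ X} its multiplier algebra, and P a contractive projection on X with P1 = 1. Then P satisfies the averaging identity P(h·Pf) = Ph·Pf for all h ∈ M(X) and f ∈ X. -/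
open MeasureTheory
open scoped ENNReal

open Finset
open scoped ComplexConjugate

set_option linter.unusedSectionVars false
set_option maxHeartbeats 2000000

namespace Stmt10Aux

lemma eval_zero_of_real {q : Polynomial ℂ} (h : ∀ x : ℝ, q.eval (x : ℂ) = 0) : q = 0 := by
  apply q.eq_zero_of_infinite_isRoot
  apply Set.Infinite.mono (s := Set.range (fun x : ℝ => (x : ℂ)))
  · rintro - ⟨x, rfl⟩; exact h x
  · exact Set.infinite_range_of_injective Complex.ofReal_injective

lemma poly_ext_c {M : ℕ} (d : ℕ → ℂ) (h : ∀ x : ℂ, ∑ m ∈ range M, d m * x ^ m = 0) :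
    ∀ m < M, d m = 0 := by
  intro m hm
  have hq : (∑ m ∈ range M, Polynomial.C (d m) * Polynomial.X ^ m) = 0 := by
    apply Polynomial.funext
    intro x
    simpa [Polynomial.eval_finset_sum] using h x
  have := congrArg (Polynomial.coeff · m) hq
  simpa [Polynomial.finset_sum_coeff, Polynomial.coeff_C_mul, Polynomial.coeff_X_pow,
    Finset.sum_ite_eq' (range M), hm] using this

/-- Extraction: if a polynomial in `s` and `conj s` vanishes for all `s : ℂ`,
all coefficients vanish. -/
lemma ext2 {M N : ℕ} (c : ℕ → ℕ → ℂ)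
    (h : ∀ s : ℂ, ∑ m ∈ range M, ∑ n ∈ range N, c m n * s ^ m * (conj s) ^ n = 0) :
    ∀ m < M, ∀ n < N, c m n = 0 := by
  have h1 : ∀ (y : ℝ) (x : ℂ),
      ∑ m ∈ range M, ∑ n ∈ range N,
        c m n * (x + y * Complex.I) ^ m * (x - y * Complex.I) ^ n = 0 := by
    intro y
    have hq : (∑ m ∈ range M, ∑ n ∈ range N, Polynomial.C (c m n) *
        (Polynomial.X + Polynomial.C ((y : ℂ) * Complex.I)) ^ m *
        (Polynomial.X - Polynomial.C ((y : ℂ) * Complex.I)) ^ n) = 0 := by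
      apply eval_zero_of_real
      intro x
      have hc : (conj ((x : ℂ) + (y : ℂ) * Complex.I)) = (x : ℂ) - (y : ℂ) * Complex.I := by
        simp [map_add, map_mul, Complex.conj_ofReal]
        ring
      have := h ((x : ℂ) + (y : ℂ) * Complex.I)
      rw [hc] at this
      simp only [Polynomial.eval_finset_sum, Polynomial.eval_mul, Polynomial.eval_add,
        Polynomial.eval_sub, Polynomial.eval_pow, Polynomial.eval_C, Polynomial.eval_X]
      exact this
    intro x
    have := congrArg (Polynomial.eval x) hq
    simp only [Polynomial.eval_finset_sum, Polynomial.eval_mul, Polynomial.eval_add,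
      Polynomial.eval_sub, Polynomial.eval_pow, Polynomial.eval_C, Polynomial.eval_X,
      Polynomial.eval_zero] at this
    exact this
  have h2 : ∀ (x y : ℂ),
      ∑ m ∈ range M, ∑ n ∈ range N,
        c m n * (x + y * Complex.I) ^ m * (x - y * Complex.I) ^ n = 0 := by
    intro x
    have hq : (∑ m ∈ range M, ∑ n ∈ range N, Polynomial.C (c m n) *
        (Polynomial.C x + Polynomial.X * Polynomial.C Complex.I) ^ m *
        (Polynomial.C x - Polynomial.X * Polynomial.C Complex.I) ^ n) = 0 := by
      apply eval_zero_of_real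
      intro y
      have := h1 y x
      simp only [Polynomial.eval_finset_sum, Polynomial.eval_mul, Polynomial.eval_add,
        Polynomial.eval_sub, Polynomial.eval_pow, Polynomial.eval_C, Polynomial.eval_X]
      exact this
    intro y
    have := congrArg (Polynomial.eval y) hq
    simp only [Polynomial.eval_finset_sum, Polynomial.eval_mul, Polynomial.eval_add,
      Polynomial.eval_sub, Polynomial.eval_pow, Polynomial.eval_C, Polynomial.eval_X,
      Polynomial.eval_zero] at this
    exact this
  have h3 : ∀ a b : ℂ, ∑ m ∈ range M, ∑ n ∈ range N, c m n * a ^ m * b ^ n = 0 := by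
    intro a b
    have e1 : (a + b) / 2 + ((a - b) / (2 * Complex.I)) * Complex.I = a := by
      field_simp
      ring
    have e2 : (a + b) / 2 - ((a - b) / (2 * Complex.I)) * Complex.I = b := by
      field_simp
      ring
    have := h2 ((a + b) / 2) ((a - b) / (2 * Complex.I))
    rw [e1, e2] at this
    exact this
  intro m hm n hn
  have hrow : ∀ b : ℂ, ∑ n ∈ range N, c m n * b ^ n = 0 := by
    intro b
    have hA : ∀ a : ℂ, ∑ m' ∈ range M, (∑ n ∈ range N, c m' n * b ^ n) * a ^ m' = 0 := by
      intro a
      have := h3 a b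
      rw [← this]
      rw [Finset.sum_congr rfl]
      intro m' _
      rw [Finset.sum_mul]
      apply Finset.sum_congr rfl
      intro n' _
      ring
    exact poly_ext_c _ hA m hm
  exact poly_ext_c _ (fun b => hrow b) n hn

end Stmt10Aux


namespace Stmt10AuxB

/-- If a hermitian (s, s̄)-polynomial has a minimum of its real part at 0, the (1,0)
coefficient vanishes. -/
lemma coeff10_zero {N : ℕ} (hN : 2 ≤ N) (c : ℕ → ℕ → ℂ)
    (hherm : ∀ m n, c n m = conj (c m n))
    (hmin : ∀ t : ℂ,
      (c 0 0).re ≤ (∑ m ∈ range N, ∑ n ∈ range N, c m n * t ^ m * (conj t) ^ n).re) :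
    c 1 0 = 0 := by
  by_contra hc
  set M : ℝ := ∑ m ∈ range N, ∑ n ∈ range N, ‖c m n‖ with hM
  have hM0 : 0 ≤ M := Finset.sum_nonneg fun _ _ => Finset.sum_nonneg fun _ _ => norm_nonneg _
  -- the remainder bound
  have key : ∀ t : ℂ, ‖t‖ ≤ 1 →
      0 ≤ 2 * (c 1 0 * t).re + M * ‖t‖ ^ 2 := by
    intro t ht
    have hsplit :
        (∑ m ∈ range N, ∑ n ∈ range N, c m n * t ^ m * (conj t) ^ n)
          = c 0 0 + c 1 0 * t + c 0 1 * conj t +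
            ∑ p ∈ (range N ×ˢ range N) \ {(0,0),(1,0),(0,1)}, c p.1 p.2 * t ^ p.1 * (conj t) ^ p.2 := by
      rw [← Finset.sum_product']
      have hsub : ({(0,0),(1,0),(0,1)} : Finset (ℕ × ℕ)) ⊆ range N ×ˢ range N := by
        intro p hp
        simp only [Finset.mem_insert, Finset.mem_singleton] at hp
        rcases hp with rfl | rfl | rfl <;> simp [Finset.mem_product, Finset.mem_range] <;> omega
      rw [← Finset.sum_sdiff hsub]
      have : ∑ p ∈ ({(0,0),(1,0),(0,1)} : Finset (ℕ × ℕ)), c p.1 p.2 * t ^ p.1 * (conj t) ^ p.2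
          = c 0 0 + c 1 0 * t + c 0 1 * conj t := by
        rw [Finset.sum_insert (by decide), Finset.sum_insert (by decide), Finset.sum_singleton]
        simp
        ring
      rw [this]
      ring
    have hrem : ‖∑ p ∈ (range N ×ˢ range N) \ {(0,0),(1,0),(0,1)},
        c p.1 p.2 * t ^ p.1 * (conj t) ^ p.2‖ ≤ M * ‖t‖ ^ 2 := by
      calc ‖∑ p ∈ (range N ×ˢ range N) \ {(0,0),(1,0),(0,1)},
            c p.1 p.2 * t ^ p.1 * (conj t) ^ p.2‖
          ≤ ∑ p ∈ (range N ×ˢ range N) \ {(0,0),(1,0),(0,1)},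
            ‖c p.1 p.2 * t ^ p.1 * (conj t) ^ p.2‖ := norm_sum_le _ _
        _ ≤ ∑ p ∈ (range N ×ˢ range N) \ {(0,0),(1,0),(0,1)}, ‖c p.1 p.2‖ * ‖t‖ ^ 2 := by
            apply Finset.sum_le_sum
            intro p hp
            have hp2 : 2 ≤ p.1 + p.2 := by
              simp only [Finset.mem_sdiff, Finset.mem_insert, Finset.mem_singleton] at hp
              have := hp.2
              rcases p with ⟨a, b⟩
              simp only [Prod.mk.injEq, not_or] at this
              omega
            rw [norm_mul, norm_mul, norm_pow, norm_pow, RCLike.norm_conj,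
              mul_assoc, ← pow_add]
            exact mul_le_mul_of_nonneg_left
              (pow_le_pow_of_le_one (norm_nonneg t) ht hp2) (norm_nonneg _)
        _ ≤ M * ‖t‖ ^ 2 := by
            rw [← Finset.sum_mul]
            apply mul_le_mul_of_nonneg_right _ (sq_nonneg ‖t‖)
            rw [hM, ← Finset.sum_product']
            exact Finset.sum_le_sum_of_subset_of_nonneg Finset.sdiff_subset
              (fun p _ _ => norm_nonneg _)
    have h1 := hmin t
    rw [hsplit] at h1
    have hc01 : c 0 1 = conj (c 1 0) := hherm 1 0
    have hre : (c 0 0 + c 1 0 * t + c 0 1 * conj t +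
        ∑ p ∈ (range N ×ˢ range N) \ {(0,0),(1,0),(0,1)},
          c p.1 p.2 * t ^ p.1 * (conj t) ^ p.2).re
        = (c 0 0).re + 2 * (c 1 0 * t).re +
          (∑ p ∈ (range N ×ˢ range N) \ {(0,0),(1,0),(0,1)},
            c p.1 p.2 * t ^ p.1 * (conj t) ^ p.2).re := by
      simp only [Complex.add_re]
      have : (c 0 1 * conj t).re = (c 1 0 * t).re := by
        rw [hc01, ← map_mul]
        exact Complex.conj_re _
      rw [this]
      ring
    rw [hre] at h1
    have habs : (∑ p ∈ (range N ×ˢ range N) \ {(0,0),(1,0),(0,1)},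
          c p.1 p.2 * t ^ p.1 * (conj t) ^ p.2).re ≤ M * ‖t‖ ^ 2 := by
      refine le_trans (Complex.re_le_norm _) ?_
      exact hrem
    linarith
  -- choose t
  have hcpos : 0 < ‖c 1 0‖ := norm_pos_iff.mpr hc
  have hns : Complex.normSq (c 1 0) = ‖c 1 0‖ ^ 2 := by
    rw [Complex.normSq_eq_norm_sq]
  have key2 : ∀ ε : ℝ, 0 < ε → ε * ‖c 1 0‖ ≤ 1 → 2 ≤ M * ε := by
    intro ε hε hε1
    have hnt : ‖(-(ε : ℂ)) * conj (c 1 0)‖ = ε * ‖c 1 0‖ := by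
      rw [norm_mul, norm_neg, RCLike.norm_conj, Complex.norm_real, Real.norm_eq_abs, abs_of_pos hε]
    have hre2 : (c 1 0 * ((-(ε : ℂ)) * conj (c 1 0))).re = -(ε * ‖c 1 0‖ ^ 2) := by
      rw [show c 1 0 * ((-(ε : ℂ)) * conj (c 1 0))
          = -(ε : ℂ) * (c 1 0 * conj (c 1 0)) from by ring, Complex.mul_conj]
      rw [show (-(ε : ℂ)) * ((Complex.normSq (c 1 0) : ℝ) : ℂ)
          = ((-(ε * Complex.normSq (c 1 0)) : ℝ) : ℂ) from by push_cast; ring]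
      rw [Complex.ofReal_re, hns]
    have h := key ((-(ε : ℂ)) * conj (c 1 0)) (by rw [hnt]; exact hε1)
    rw [hre2, hnt] at h
    nlinarith [mul_pos hε (pow_pos hcpos 2), sq_nonneg (ε * ‖c 1 0‖)]
  have hM2 : 0 < M + 2 := by linarith
  have hfin := key2 (min (‖c 1 0‖⁻¹) ((M + 2)⁻¹))
    (lt_min (by positivity) (by positivity))
    (by
      calc min (‖c 1 0‖⁻¹) ((M + 2)⁻¹) * ‖c 1 0‖ ≤ ‖c 1 0‖⁻¹ * ‖c 1 0‖ :=
            mul_le_mul_of_nonneg_right (min_le_left _ _) (norm_nonneg _)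
        _ = 1 := inv_mul_cancel₀ (ne_of_gt hcpos))
  have : M * min (‖c 1 0‖⁻¹) ((M + 2)⁻¹) ≤ M * (M + 2)⁻¹ :=
    mul_le_mul_of_nonneg_left (min_le_right _ _) hM0
  have hlt : M * (M + 2)⁻¹ < 1 := by
    rw [mul_inv_lt_iff₀ hM2]
    linarith
  linarith

end Stmt10AuxB


namespace Stmt10AuxC

variable {Ω : Type*} {m0 : MeasurableSpace Ω} {μ : Measure Ω} [IsProbabilityMeasure μ] {k : ℕ}

local notation "q" => ((2 * k + 2 : ℕ) : ℝ≥0∞)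

lemma hq0 : q ≠ 0 := by
  simp

lemma hqt : q ≠ ∞ := ENNReal.natCast_ne_top _

lemma hinvdiv (a : ℕ) : (q / (a : ℝ≥0∞))⁻¹ = (a : ℝ≥0∞) / q :=
  ENNReal.inv_div (Or.inr hqt) (Or.inr hq0)

lemma harith (a b : ℕ) : (q / ((a + b : ℕ) : ℝ≥0∞))⁻¹ = (q / (a : ℝ≥0∞))⁻¹ + (q / (b : ℝ≥0∞))⁻¹ := by
  rw [hinvdiv, hinvdiv, hinvdiv, ENNReal.div_add_div_same]
  push_cast
  ring_nf

lemma memℒp_pow {f : Ω → ℂ} (hf : MemLp f q μ) (e : ℕ) :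
    MemLp (fun ω => f ω ^ e) (q / (e : ℝ≥0∞)) μ := by
  induction e with
  | zero =>
      simp only [pow_zero, Nat.cast_zero, ENNReal.div_zero hq0]
      exact memLp_top_const 1
  | succ e ih =>
      have hfun : (fun ω => f ω ^ (e + 1)) = f • (fun ω => f ω ^ e) := by
        funext ω
        simp [Pi.smul_apply, smul_eq_mul, pow_succ]
        ring
      rw [hfun]
      haveI : ENNReal.HolderTriple q (q / (e : ℝ≥0∞)) (q / ((e + 1 : ℕ) : ℝ≥0∞)) := ⟨by
        rw [hinvdiv (k := k) (e + 1), hinvdiv (k := k) e,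
          show ((e + 1 : ℕ) : ℝ≥0∞) = (e : ℝ≥0∞) + 1 from by push_cast; rfl,
          ← ENNReal.div_add_div_same, one_div, add_comm]⟩
      exact ih.smul hf

lemma memℒp_prod : ∀ {n : ℕ} (x : Fin n → Ω → ℂ), (∀ i, MemLp (x i) q μ) → ∀ (e : Fin n → ℕ),
    MemLp (fun ω => ∏ i, x i ω ^ e i) (q / ((∑ i, e i : ℕ) : ℝ≥0∞)) μ := by
  intro n
  induction n with
  | zero =>
      intro x hx e
      simp only [Finset.univ_eq_empty, Finset.prod_empty, Finset.sum_empty, Nat.cast_zero,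
        ENNReal.div_zero hq0]
      exact memLp_top_const 1
  | succ n ih =>
      intro x hx e
      have hfun : (fun ω => ∏ i, x i ω ^ e i)
          = (fun ω => x 0 ω ^ e 0) • (fun ω => ∏ i : Fin n, x i.succ ω ^ e i.succ) := by
        funext ω
        simp [Fin.prod_univ_succ, Pi.smul_apply, smul_eq_mul]
      rw [hfun]
      haveI : ENNReal.HolderTriple (q / (e 0 : ℝ≥0∞))
          (q / ((∑ i : Fin n, e i.succ : ℕ) : ℝ≥0∞)) (q / ((∑ i, e i : ℕ) : ℝ≥0∞)) := ⟨by
        rw [show (∑ i, e i) = (e 0 + ∑ i : Fin n, e i.succ) from Fin.sum_univ_succ e]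
        exact (harith (k := k) (e 0) (∑ i : Fin n, e i.succ)).symm⟩
      exact MemLp.smul (ih (fun i => x i.succ) (fun i => hx i.succ) (fun i => e i.succ))
        (memℒp_pow (hx 0) (e 0))

lemma integrable_prod {n : ℕ} (x : Fin n → Ω → ℂ) (hx : ∀ i, MemLp (x i) q μ)
    (e : Fin n → ℕ) (he : (∑ i, e i) ≤ 2 * k + 2) :
    Integrable (fun ω => ∏ i, x i ω ^ e i) μ := by
  have hmem := memℒp_prod x hx e
  rw [← memLp_one_iff_integrable]
  apply hmem.mono_exponent
  rcases Nat.eq_zero_or_pos (∑ i, e i) with hS | hS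
  · rw [hS, Nat.cast_zero, ENNReal.div_zero hq0]
    exact le_top
  · rw [ENNReal.le_div_iff_mul_le (Or.inl (by exact_mod_cast hS.ne')) (Or.inl (ENNReal.natCast_ne_top _)), one_mul]
    exact_mod_cast he

lemma memℒp_conj {f : Ω → ℂ} (hf : MemLp f q μ) : MemLp (fun ω => conj (f ω)) q μ := by
  apply MemLp.of_le hf (Complex.continuous_conj.comp_aestronglyMeasurable hf.aestronglyMeasurable)
  filter_upwards with ω
  rw [RCLike.norm_conj]

lemma integrable5 (x1 x2 x3 x4 x5 : Ω → ℂ)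
    (h1 : MemLp x1 q μ) (h2 : MemLp x2 q μ) (h3 : MemLp x3 q μ) (h4 : MemLp x4 q μ)
    (h5 : MemLp x5 q μ) (e1 e2 e3 e4 e5 : ℕ) (he : e1 + e2 + e3 + e4 + e5 ≤ 2 * k + 2) :
    Integrable (fun ω => x1 ω ^ e1 * x2 ω ^ e2 * x3 ω ^ e3 * x4 ω ^ e4 * x5 ω ^ e5) μ := by
  have := integrable_prod ![x1, x2, x3, x4, x5] (by
    intro i; fin_cases i <;> assumption) ![e1, e2, e3, e4, e5] (by
    rw [Fin.sum_univ_five]; simpa using he)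
  simpa [Fin.prod_univ_five] using this

lemma integrable7 (x1 x2 x3 x4 x5 x6 x7 : Ω → ℂ)
    (h1 : MemLp x1 q μ) (h2 : MemLp x2 q μ) (h3 : MemLp x3 q μ) (h4 : MemLp x4 q μ)
    (h5 : MemLp x5 q μ) (h6 : MemLp x6 q μ) (h7 : MemLp x7 q μ)
    (e1 e2 e3 e4 e5 e6 e7 : ℕ) (he : e1 + e2 + e3 + e4 + e5 + e6 + e7 ≤ 2 * k + 2) :
    Integrable (fun ω => x1 ω ^ e1 * x2 ω ^ e2 * x3 ω ^ e3 * x4 ω ^ e4 * x5 ω ^ e5 *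
      x6 ω ^ e6 * x7 ω ^ e7) μ := by
  have := integrable_prod ![x1, x2, x3, x4, x5, x6, x7] (by
    intro i; fin_cases i <;> assumption) ![e1, e2, e3, e4, e5, e6, e7] (by
    rw [Fin.sum_univ_seven]; simpa using he)
  simpa [Fin.prod_univ_seven] using this

lemma norm_pow_eq [Fact (1 ≤ q)] (g : Lp ℂ q μ) :
    ∫ ω, ‖g ω‖ ^ (2 * k + 2) ∂μ = ‖g‖ ^ (2 * k + 2) := by
  have hg := Lp.memLp g
  rw [Lp.norm_def, hg.eLpNorm_eq_integral_rpow_norm hq0 hqt]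
  rw [ENNReal.toReal_ofReal (Real.rpow_nonneg (integral_nonneg fun ω => by positivity) _)]
  have hqr : (q : ℝ≥0∞).toReal = ((2 * k + 2 : ℕ) : ℝ) := ENNReal.toReal_natCast _
  rw [hqr]
  have hint : ∫ ω, ‖g ω‖ ^ (((2 * k + 2 : ℕ) : ℝ)) ∂μ = ∫ ω, ‖g ω‖ ^ (2 * k + 2) ∂μ := by
    apply integral_congr_ae
    filter_upwards with ω
    rw [Real.rpow_natCast]
  rw [hint]
  rw [← Real.rpow_natCast (x := (∫ ω, ‖g ω‖ ^ (2 * k + 2) ∂μ) ^ (((2 * k + 2 : ℕ) : ℝ))⁻¹)]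
  rw [← Real.rpow_mul (integral_nonneg fun ω => by positivity)]
  rw [inv_mul_cancel₀ (by positivity), Real.rpow_one]

lemma hnormint [Fact (1 ≤ q)] (g : Lp ℂ q μ) (G : Ω → ℂ) (hG : ⇑g =ᵐ[μ] G) :
    ∫ ω, G ω ^ (k + 1) * (conj (G ω)) ^ (k + 1) ∂μ = ((‖g‖ ^ (2 * k + 2) : ℝ) : ℂ) := by
  have h1 : ∫ ω, G ω ^ (k + 1) * (conj (G ω)) ^ (k + 1) ∂μ
      = ∫ ω, ((‖g ω‖ ^ (2 * k + 2) : ℝ) : ℂ) ∂μ := by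
    apply integral_congr_ae
    filter_upwards [hG] with ω hω
    rw [← hω, ← mul_pow, Complex.mul_conj, ← Complex.ofReal_pow]
    congr 1
    rw [Complex.normSq_eq_norm_sq, ← pow_mul]
    congr 1 <;> try omega
  rw [h1, ← norm_pow_eq g]
  exact integral_ofReal

lemma expand_int (x y w1 w2 w3 : Ω → ℂ) (hx : MemLp x q μ) (hy : MemLp y q μ)
    (hw1 : MemLp w1 q μ) (hw2 : MemLp w2 q μ) (hw3 : MemLp w3 q μ)
    (A B d1 d2 d3 : ℕ) (hdeg : A + B + d1 + d2 + d3 ≤ 2 * k + 2) (s : ℂ) :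
    ∫ ω, (x ω + s * y ω) ^ A * (conj (x ω) + conj s * conj (y ω)) ^ B *
        (w1 ω ^ d1 * w2 ω ^ d2 * w3 ω ^ d3) ∂μ
      = ∑ m ∈ range (A + 1), ∑ n ∈ range (B + 1),
          ((A.choose m : ℂ) * (B.choose n : ℂ) * s ^ m * (conj s) ^ n) *
            ∫ ω, x ω ^ (A - m) * y ω ^ m * (conj (x ω)) ^ (B - n) * (conj (y ω)) ^ n *
              (w1 ω ^ d1 * w2 ω ^ d2 * w3 ω ^ d3) ∂μ := by
  have hmono : ∀ m ∈ range (A + 1), ∀ n ∈ range (B + 1), Integrable (fun ω => x ω ^ (A - m) * y ω ^ m *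
      (conj (x ω)) ^ (B - n) * (conj (y ω)) ^ n *
      (w1 ω ^ d1 * w2 ω ^ d2 * w3 ω ^ d3)) μ := by
    intro m hm' n hn'
    rw [Finset.mem_range] at hm' hn'
    have := integrable7 x y (fun ω => conj (x ω)) (fun ω => conj (y ω)) w1 w2 w3
      hx hy (memℒp_conj hx) (memℒp_conj hy) hw1 hw2 hw3
      (A - m) m (B - n) n d1 d2 d3 (by omega)
    apply this.congr
    filter_upwards with ω
    ring
  have hF : ∀ m ∈ range (A + 1), ∀ n ∈ range (B + 1), Integrable (fun ω =>
      ((A.choose m : ℂ) * (B.choose n : ℂ) * s ^ m * (conj s) ^ n) *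
      (x ω ^ (A - m) * y ω ^ m * (conj (x ω)) ^ (B - n) * (conj (y ω)) ^ n *
        (w1 ω ^ d1 * w2 ω ^ d2 * w3 ω ^ d3))) μ :=
    fun m hm n hn => (hmono m hm n hn).const_mul _
  have hpt : ∀ ω, (x ω + s * y ω) ^ A * (conj (x ω) + conj s * conj (y ω)) ^ B *
        (w1 ω ^ d1 * w2 ω ^ d2 * w3 ω ^ d3)
      = ∑ m ∈ range (A + 1), ∑ n ∈ range (B + 1),
          ((A.choose m : ℂ) * (B.choose n : ℂ) * s ^ m * (conj s) ^ n) *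
          (x ω ^ (A - m) * y ω ^ m * (conj (x ω)) ^ (B - n) * (conj (y ω)) ^ n *
            (w1 ω ^ d1 * w2 ω ^ d2 * w3 ω ^ d3)) := by
    intro ω
    rw [add_comm (x ω) (s * y ω), add_pow, add_comm (conj (x ω)) (conj s * conj (y ω)), add_pow]
    rw [Finset.sum_mul_sum, Finset.sum_mul]
    apply Finset.sum_congr rfl
    intro m hm
    rw [Finset.sum_mul]
    apply Finset.sum_congr rfl
    intro n hn
    ring
  calc ∫ ω, (x ω + s * y ω) ^ A * (conj (x ω) + conj s * conj (y ω)) ^ B *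
        (w1 ω ^ d1 * w2 ω ^ d2 * w3 ω ^ d3) ∂μ
      = ∫ ω, ∑ m ∈ range (A + 1), ∑ n ∈ range (B + 1),
          ((A.choose m : ℂ) * (B.choose n : ℂ) * s ^ m * (conj s) ^ n) *
          (x ω ^ (A - m) * y ω ^ m * (conj (x ω)) ^ (B - n) * (conj (y ω)) ^ n *
            (w1 ω ^ d1 * w2 ω ^ d2 * w3 ω ^ d3)) ∂μ :=
        integral_congr_ae (Filter.Eventually.of_forall hpt)
    _ = ∑ m ∈ range (A + 1), ∑ n ∈ range (B + 1),
          ((A.choose m : ℂ) * (B.choose n : ℂ) * s ^ m * (conj s) ^ n) *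
            ∫ ω, x ω ^ (A - m) * y ω ^ m * (conj (x ω)) ^ (B - n) * (conj (y ω)) ^ n *
              (w1 ω ^ d1 * w2 ω ^ d2 * w3 ω ^ d3) ∂μ := by
        rw [integral_finset_sum _ (fun m hm => integrable_finset_sum _ (fun n hn => hF m hm n hn))]
        apply Finset.sum_congr rfl
        intro m hm
        rw [integral_finset_sum _ (fun n hn => hF m hm n hn)]
        apply Finset.sum_congr rfl
        intro n hn
        exact integral_const_mul _ _

end Stmt10AuxC



/-- Let `p = 2k+2` with `k ≥ 1`, `X` a closed subspace of `L^p(μ)` containing the constants,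
`M(X)` its multiplier algebra, and `P` a contractive projection on `X` with `P1 = 1`. Then `P`
satisfies the averaging identity `P(h·Pf) = Ph·Pf` for all `h ∈ M(X)` and `f ∈ X`. -/
theorem stmt10 {Ω : Type*} {m0 : MeasurableSpace Ω} (μ : Measure Ω) [IsProbabilityMeasure μ]
    (k : ℕ) (hk : 1 ≤ k) [Fact (1 ≤ ((2 * k + 2 : ℕ) : ℝ≥0∞))]
    (X : Submodule ℂ (Lp ℂ ((2 * k + 2 : ℕ) : ℝ≥0∞) μ))
    (hX : IsClosed (X : Set (Lp ℂ ((2 * k + 2 : ℕ) : ℝ≥0∞) μ)))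
    (hconst : ∀ c : ℂ, ∃ u : X, ⇑((u : X) : Lp ℂ ((2 * k + 2 : ℕ) : ℝ≥0∞) μ) =ᵐ[μ] fun _ => c)
    (P : X →L[ℂ] X) (hproj : ∀ x : X, P (P x) = P x) (hP : ‖P‖ ≤ 1)
    (o : X) (ho : ⇑((o : X) : Lp ℂ ((2 * k + 2 : ℕ) : ℝ≥0∞) μ) =ᵐ[μ] fun _ => (1 : ℂ))
    (hPo : P o = o)
    -- `h` is a multiplier of `X`:
    (h : X) (hmul : ∀ f : X, ∃ u : X,
      ⇑((u : X) : Lp ℂ ((2 * k + 2 : ℕ) : ℝ≥0∞) μ) =ᵐ[μ]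
        ⇑((h : X) : Lp ℂ ((2 * k + 2 : ℕ) : ℝ≥0∞) μ) * ⇑((f : X) : Lp ℂ ((2 * k + 2 : ℕ) : ℝ≥0∞) μ))
    (f w : X)
    (hw : ⇑((w : X) : Lp ℂ ((2 * k + 2 : ℕ) : ℝ≥0∞) μ) =ᵐ[μ]
      ⇑((h : X) : Lp ℂ ((2 * k + 2 : ℕ) : ℝ≥0∞) μ) * ⇑((P f : X) : Lp ℂ ((2 * k + 2 : ℕ) : ℝ≥0∞) μ)) :
    ⇑((P w : X) : Lp ℂ ((2 * k + 2 : ℕ) : ℝ≥0∞) μ) =ᵐ[μ]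
      ⇑((P h : X) : Lp ℂ ((2 * k + 2 : ℕ) : ℝ≥0∞) μ) *
        ⇑((P f : X) : Lp ℂ ((2 * k + 2 : ℕ) : ℝ≥0∞) μ) := by
  classical
  have hFmem : ∀ a : X, MemLp (⇑((a : X) : Lp ℂ ((2 * k + 2 : ℕ) : ℝ≥0∞) μ))
      ((2 * k + 2 : ℕ) : ℝ≥0∞) μ := fun a => Lp.memLp _
  have hone : MemLp (fun _ : Ω => (1 : ℂ)) ((2 * k + 2 : ℕ) : ℝ≥0∞) μ := memLp_const 1
  have hnormP : ∀ y : X, ‖P y‖ ≤ ‖y‖ := by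
    intro y
    calc ‖P y‖ ≤ ‖P‖ * ‖y‖ := P.le_opNorm y
      _ ≤ 1 * ‖y‖ := mul_le_mul_of_nonneg_right hP (norm_nonneg y)
      _ = ‖y‖ := one_mul _
  have hcoe_add : ∀ (a b : X) (s : ℂ),
      ⇑(((a + s • b : X) : Lp ℂ ((2 * k + 2 : ℕ) : ℝ≥0∞) μ)) =ᵐ[μ]
        fun ω => ⇑((a : X) : Lp ℂ ((2 * k + 2 : ℕ) : ℝ≥0∞) μ) ω +
          s * ⇑((b : X) : Lp ℂ ((2 * k + 2 : ℕ) : ℝ≥0∞) μ) ω := by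
    intro a b s
    have h1 : (((a + s • b : X) : Lp ℂ ((2 * k + 2 : ℕ) : ℝ≥0∞) μ))
        = ((a : X) : Lp ℂ ((2 * k + 2 : ℕ) : ℝ≥0∞) μ) +
          s • ((b : X) : Lp ℂ ((2 * k + 2 : ℕ) : ℝ≥0∞) μ) := rfl
    rw [h1]
    filter_upwards [Lp.coeFn_add ((a : X) : Lp ℂ ((2 * k + 2 : ℕ) : ℝ≥0∞) μ)
      (s • ((b : X) : Lp ℂ ((2 * k + 2 : ℕ) : ℝ≥0∞) μ)),
      Lp.coeFn_smul s ((b : X) : Lp ℂ ((2 * k + 2 : ℕ) : ℝ≥0∞) μ)] with ω h2 h3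
    rw [h2, Pi.add_apply, h3, Pi.smul_apply, smul_eq_mul]
  -- Lemma A : first-order optimality
  have lemA : ∀ x z : X, P x = x → P z = 0 →
      ∫ ω, ⇑((x : X) : Lp ℂ ((2 * k + 2 : ℕ) : ℝ≥0∞) μ) ω ^ (k + 1 - 1) *
        ⇑((z : X) : Lp ℂ ((2 * k + 2 : ℕ) : ℝ≥0∞) μ) ω ^ 1 *
        (conj (⇑((x : X) : Lp ℂ ((2 * k + 2 : ℕ) : ℝ≥0∞) μ) ω)) ^ (k + 1 - 0) *
        (conj (⇑((z : X) : Lp ℂ ((2 * k + 2 : ℕ) : ℝ≥0∞) μ) ω)) ^ 0 ∂μ = 0 := by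
    intro x z hx hz
    set xc := ⇑((x : X) : Lp ℂ ((2 * k + 2 : ℕ) : ℝ≥0∞) μ) with hxc
    set zc := ⇑((z : X) : Lp ℂ ((2 * k + 2 : ℕ) : ℝ≥0∞) μ) with hzc
    set c : ℕ → ℕ → ℂ := fun m n => ((k + 1).choose m : ℂ) * ((k + 1).choose n : ℂ) *
      ∫ ω, xc ω ^ (k + 1 - m) * zc ω ^ m * (conj (xc ω)) ^ (k + 1 - n) *
        (conj (zc ω)) ^ n ∂μ with hc
    have hherm : ∀ m n, c n m = conj (c m n) := by
      intro m n
      have h1 : ∫ ω, xc ω ^ (k + 1 - n) * zc ω ^ n * (conj (xc ω)) ^ (k + 1 - m) *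
          (conj (zc ω)) ^ m ∂μ
          = ∫ ω, conj (xc ω ^ (k + 1 - m) * zc ω ^ m * (conj (xc ω)) ^ (k + 1 - n) *
            (conj (zc ω)) ^ n) ∂μ := by
        apply integral_congr_ae
        filter_upwards with ω
        simp only [map_mul, map_pow, Complex.conj_conj]
        ring
      simp only [hc]
      rw [map_mul, map_mul, map_natCast, map_natCast, ← integral_conj, ← h1]
      ring
    have hexp : ∀ t : ℂ, ∫ ω, (xc ω + t * zc ω) ^ (k + 1) *
          (conj (xc ω) + conj t * conj (zc ω)) ^ (k + 1) ∂μ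
        = ∑ m ∈ range (k + 2), ∑ n ∈ range (k + 2), c m n * t ^ m * (conj t) ^ n := by
      intro t
      have he := Stmt10AuxC.expand_int (μ := μ) (k := k) xc zc
        (fun _ => 1) (fun _ => 1) (fun _ => 1) (hFmem x) (hFmem z) hone hone hone
        (k + 1) (k + 1) 0 0 0 (by omega) t
      simp only [pow_zero, mul_one] at he
      rw [he]
      apply Finset.sum_congr rfl
      intro m _
      apply Finset.sum_congr rfl
      intro n _
      simp only [hc]
      ring
    have hmin : ∀ t : ℂ, (c 0 0).re ≤
        (∑ m ∈ range (k + 2), ∑ n ∈ range (k + 2), c m n * t ^ m * (conj t) ^ n).re := by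
      intro t
      have hgt : ⇑(((x : X) : Lp ℂ ((2 * k + 2 : ℕ) : ℝ≥0∞) μ) +
          t • ((z : X) : Lp ℂ ((2 * k + 2 : ℕ) : ℝ≥0∞) μ)) =ᵐ[μ] fun ω => xc ω + t * zc ω := by
        filter_upwards [Lp.coeFn_add ((x : X) : Lp ℂ ((2 * k + 2 : ℕ) : ℝ≥0∞) μ)
          (t • ((z : X) : Lp ℂ ((2 * k + 2 : ℕ) : ℝ≥0∞) μ)),
          Lp.coeFn_smul t ((z : X) : Lp ℂ ((2 * k + 2 : ℕ) : ℝ≥0∞) μ)] with ω h2 h3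
        rw [h2, Pi.add_apply, h3, Pi.smul_apply, smul_eq_mul]
      have hLt : ∫ ω, (xc ω + t * zc ω) ^ (k + 1) *
            (conj (xc ω) + conj t * conj (zc ω)) ^ (k + 1) ∂μ
          = ((‖((x : X) : Lp ℂ ((2 * k + 2 : ℕ) : ℝ≥0∞) μ) +
              t • ((z : X) : Lp ℂ ((2 * k + 2 : ℕ) : ℝ≥0∞) μ)‖ ^ (2 * k + 2) : ℝ) : ℂ) := by
        rw [← Stmt10AuxC.hnormint (k := k) _ _ hgt]
        apply integral_congr_ae
        filter_upwards with ω
        simp only [map_add, map_mul]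
      have hL0 : (c 0 0) = ((‖((x : X) : Lp ℂ ((2 * k + 2 : ℕ) : ℝ≥0∞) μ)‖ ^ (2 * k + 2) : ℝ) : ℂ) := by
        rw [← Stmt10AuxC.hnormint (k := k) ((x : X) : Lp ℂ ((2 * k + 2 : ℕ) : ℝ≥0∞) μ) xc
          Filter.EventuallyEq.rfl]
        simp only [hc, Nat.choose_zero_right, Nat.cast_one, one_mul, Nat.sub_zero, pow_zero,
          mul_one]
      rw [← hexp t, hLt, hL0, Complex.ofReal_re, Complex.ofReal_re]
      have hle : ‖((x : X) : Lp ℂ ((2 * k + 2 : ℕ) : ℝ≥0∞) μ)‖ ≤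
          ‖((x : X) : Lp ℂ ((2 * k + 2 : ℕ) : ℝ≥0∞) μ) +
            t • ((z : X) : Lp ℂ ((2 * k + 2 : ℕ) : ℝ≥0∞) μ)‖ := by
        have hPfix : P (x + t • z) = x := by
          rw [map_add, P.map_smul, hx, hz, smul_zero, add_zero]
        calc ‖((x : X) : Lp ℂ ((2 * k + 2 : ℕ) : ℝ≥0∞) μ)‖ = ‖x‖ := rfl
          _ = ‖P (x + t • z)‖ := by rw [hPfix]
          _ ≤ ‖x + t • z‖ := hnormP _
          _ = ‖((x : X) : Lp ℂ ((2 * k + 2 : ℕ) : ℝ≥0∞) μ) +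
              t • ((z : X) : Lp ℂ ((2 * k + 2 : ℕ) : ℝ≥0∞) μ)‖ := rfl
      exact pow_le_pow_left₀ (norm_nonneg _) hle _
    have h10 := Stmt10AuxB.coeff10_zero (by omega) c hherm hmin
    simp only [hc] at h10
    rcases mul_eq_zero.mp h10 with h1 | h1
    · exfalso
      rcases mul_eq_zero.mp h1 with h2 | h2 <;>
      · rw [Nat.cast_eq_zero] at h2
        have := Nat.choose_pos (n := k + 1) (k := 1) (by omega)
        have := Nat.choose_pos (n := k + 1) (k := 0) (by omega)
        omega
    · exact h1
  -- Lemma B : one-step polarization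
  have lemB : ∀ x u z : X, P x = x → P u = u → P z = 0 → ∀ m n : ℕ, m ≤ k → n ≤ k + 1 →
      ∫ ω, ⇑((x : X) : Lp ℂ ((2 * k + 2 : ℕ) : ℝ≥0∞) μ) ω ^ (k - m) *
        ⇑((u : X) : Lp ℂ ((2 * k + 2 : ℕ) : ℝ≥0∞) μ) ω ^ m *
        (conj (⇑((x : X) : Lp ℂ ((2 * k + 2 : ℕ) : ℝ≥0∞) μ) ω)) ^ (k + 1 - n) *
        (conj (⇑((u : X) : Lp ℂ ((2 * k + 2 : ℕ) : ℝ≥0∞) μ) ω)) ^ n *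
        ⇑((z : X) : Lp ℂ ((2 * k + 2 : ℕ) : ℝ≥0∞) μ) ω ∂μ = 0 := by
    intro x u z hx hu hz
    set xc := ⇑((x : X) : Lp ℂ ((2 * k + 2 : ℕ) : ℝ≥0∞) μ) with hxc
    set uc := ⇑((u : X) : Lp ℂ ((2 * k + 2 : ℕ) : ℝ≥0∞) μ) with huc
    set zc := ⇑((z : X) : Lp ℂ ((2 * k + 2 : ℕ) : ℝ≥0∞) μ) with hzc
    set d : ℕ → ℕ → ℂ := fun m n => (k.choose m : ℂ) * ((k + 1).choose n : ℂ) *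
      ∫ ω, xc ω ^ (k - m) * uc ω ^ m * (conj (xc ω)) ^ (k + 1 - n) *
        (conj (uc ω)) ^ n * zc ω ∂μ with hd
    have hiden : ∀ s : ℂ, ∑ m ∈ range (k + 1), ∑ n ∈ range (k + 2),
        d m n * s ^ m * (conj s) ^ n = 0 := by
      intro s
      have he := Stmt10AuxC.expand_int (μ := μ) (k := k) xc uc zc
        (fun _ => 1) (fun _ => 1) (hFmem x) (hFmem u) (hFmem z) hone hone
        k (k + 1) 1 0 0 (by omega) s
      simp only [pow_zero, mul_one, pow_one] at he
      have h0 : ∫ ω, (xc ω + s * uc ω) ^ k *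
          (conj (xc ω) + conj s * conj (uc ω)) ^ (k + 1) * zc ω ∂μ = 0 := by
        have hfix : P (x + s • u) = x + s • u := by rw [map_add, P.map_smul, hx, hu]
        have hA := lemA (x + s • u) z hfix hz
        simp only [show k + 1 - 1 = k from by omega, Nat.sub_zero, pow_one, pow_zero,
          mul_one] at hA
        rw [← hA]
        apply integral_congr_ae
        filter_upwards [hcoe_add x u s] with ω hω
        rw [hω]
        simp only [map_add, map_mul]
        ring
      rw [he] at h0
      rw [← h0]
      apply Finset.sum_congr rfl
      intro m _
      apply Finset.sum_congr rfl
      intro n _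
      simp only [hd]
      ring
    intro m n hm hn
    have hdmn := Stmt10Aux.ext2 d hiden m (by omega) n (by omega)
    simp only [hd] at hdmn
    rcases mul_eq_zero.mp hdmn with h1 | h1
    · exfalso
      rcases mul_eq_zero.mp h1 with h2 | h2 <;>
      · rw [Nat.cast_eq_zero] at h2
        have := Nat.choose_pos (n := k) (k := m) hm
        have := Nat.choose_pos (n := k + 1) (k := n) hn
        omega
    · exact h1
  -- Lemma C : two-step polarization
  have lemC : ∀ y u z : X, P y = y → P u = u → P z = 0 → ∀ a m b n : ℕ,
      a + m ≤ k → b + n ≤ k + 1 →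
      ∫ ω, ⇑((y : X) : Lp ℂ ((2 * k + 2 : ℕ) : ℝ≥0∞) μ) ω ^ a *
        ⇑((u : X) : Lp ℂ ((2 * k + 2 : ℕ) : ℝ≥0∞) μ) ω ^ m *
        (conj (⇑((y : X) : Lp ℂ ((2 * k + 2 : ℕ) : ℝ≥0∞) μ) ω)) ^ b *
        (conj (⇑((u : X) : Lp ℂ ((2 * k + 2 : ℕ) : ℝ≥0∞) μ) ω)) ^ n *
        ⇑((z : X) : Lp ℂ ((2 * k + 2 : ℕ) : ℝ≥0∞) μ) ω ∂μ = 0 := by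
    intro y u z hy hu hz a m b n ham hbn
    set yc := ⇑((y : X) : Lp ℂ ((2 * k + 2 : ℕ) : ℝ≥0∞) μ) with hyc
    set uc := ⇑((u : X) : Lp ℂ ((2 * k + 2 : ℕ) : ℝ≥0∞) μ) with huc
    set zc := ⇑((z : X) : Lp ℂ ((2 * k + 2 : ℕ) : ℝ≥0∞) μ) with hzc
    set oc := ⇑((o : X) : Lp ℂ ((2 * k + 2 : ℕ) : ℝ≥0∞) μ) with hoc
    set e : ℕ → ℕ → ℂ := fun a' b' => ((k - m).choose a' : ℂ) * ((k + 1 - n).choose b' : ℂ) *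
      ∫ ω, (1 : ℂ) ^ (k - m - a') * yc ω ^ a' * (conj (1 : ℂ)) ^ (k + 1 - n - b') *
        (conj (yc ω)) ^ b' * (uc ω ^ m * (conj (uc ω)) ^ n * zc ω) ∂μ with hedef
    have hiden : ∀ s : ℂ, ∑ a' ∈ range (k - m + 1), ∑ b' ∈ range (k + 1 - n + 1),
        e a' b' * s ^ a' * (conj s) ^ b' = 0 := by
      intro s
      have he := Stmt10AuxC.expand_int (μ := μ) (k := k) (fun _ => (1 : ℂ)) yc uc
        (fun ω => conj (uc ω)) zc hone (hFmem y) (hFmem u)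
        (Stmt10AuxC.memℒp_conj (hFmem u)) (hFmem z)
        (k - m) (k + 1 - n) m n 1 (by omega) s
      simp only [pow_one] at he
      have h0 : ∫ ω, ((1 : ℂ) + s * yc ω) ^ (k - m) *
          (conj (1 : ℂ) + conj s * conj (yc ω)) ^ (k + 1 - n) *
          (uc ω ^ m * (conj (uc ω)) ^ n * zc ω) ∂μ = 0 := by
        have hfix : P (o + s • y) = o + s • y := by rw [map_add, P.map_smul, hPo, hy]
        have hB := lemB (o + s • y) u z hfix hu hz m n (by omega) (by omega)
        rw [← hB]
        apply integral_congr_ae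
        filter_upwards [hcoe_add o y s, ho] with ω h1 h2
        rw [h1]
        rw [show (⇑((o : X) : Lp ℂ ((2 * k + 2 : ℕ) : ℝ≥0∞) μ) ω) = (1 : ℂ) from h2]
        simp only [map_add, map_mul, map_one]
        ring
      rw [he] at h0
      rw [← h0]
      apply Finset.sum_congr rfl
      intro a' _
      apply Finset.sum_congr rfl
      intro b' _
      simp only [hedef]
      ring
    have hemn := Stmt10Aux.ext2 e hiden a (by omega) b (by omega)
    simp only [hedef] at hemn
    rcases mul_eq_zero.mp hemn with h1 | h1
    · exfalso
      rcases mul_eq_zero.mp h1 with h2 | h2 <;>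
      · rw [Nat.cast_eq_zero] at h2
        have := Nat.choose_pos (n := k - m) (k := a) (by omega)
        have := Nat.choose_pos (n := k + 1 - n) (k := b) (by omega)
        omega
    · rw [← h1]
      apply integral_congr_ae
      filter_upwards with ω
      simp only [map_one, one_pow, one_mul]
      ring
  -- small-product integrability helpers
  have int2 : ∀ a b : Ω → ℂ, MemLp a ((2 * k + 2 : ℕ) : ℝ≥0∞) μ →
      MemLp b ((2 * k + 2 : ℕ) : ℝ≥0∞) μ → Integrable (fun ω => a ω * b ω) μ := by
    intro a b ha hb
    have := Stmt10AuxC.integrable5 (μ := μ) (k := k) a b (fun _ => 1) (fun _ => 1) (fun _ => 1)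
      ha hb hone hone hone 1 1 0 0 0 (by omega)
    simpa using this
  have int3 : ∀ a b c : Ω → ℂ, MemLp a ((2 * k + 2 : ℕ) : ℝ≥0∞) μ →
      MemLp b ((2 * k + 2 : ℕ) : ℝ≥0∞) μ → MemLp c ((2 * k + 2 : ℕ) : ℝ≥0∞) μ →
      Integrable (fun ω => a ω * b ω * c ω) μ := by
    intro a b c ha hb hc
    have := Stmt10AuxC.integrable5 (μ := μ) (k := k) a b c (fun _ => 1) (fun _ => 1)
      ha hb hc hone hone 1 1 1 0 0 (by omega)
    simpa using this
  have int4 : ∀ a b c d : Ω → ℂ, MemLp a ((2 * k + 2 : ℕ) : ℝ≥0∞) μ →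
      MemLp b ((2 * k + 2 : ℕ) : ℝ≥0∞) μ → MemLp c ((2 * k + 2 : ℕ) : ℝ≥0∞) μ →
      MemLp d ((2 * k + 2 : ℕ) : ℝ≥0∞) μ →
      Integrable (fun ω => a ω * b ω * c ω * d ω) μ := by
    intro a b c d ha hb hc hd
    have := Stmt10AuxC.integrable5 (μ := μ) (k := k) a b c d (fun _ => 1)
      ha hb hc hd hone 1 1 1 1 0 (by omega)
    simpa using this
  -- the kernel elements
  set z1 : X := h - P h with hz1d
  set z0 : X := w - P w with hz0d
  have hz1P : P z1 = 0 := by rw [hz1d, map_sub, hproj, sub_self]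
  have hz0P : P z0 = 0 := by rw [hz0d, map_sub, hproj, sub_self]
  -- coercions
  set uc := ⇑((P f : X) : Lp ℂ ((2 * k + 2 : ℕ) : ℝ≥0∞) μ) with hucd
  set vc := ⇑((P h : X) : Lp ℂ ((2 * k + 2 : ℕ) : ℝ≥0∞) μ) with hvcd
  set pwc := ⇑((P w : X) : Lp ℂ ((2 * k + 2 : ℕ) : ℝ≥0∞) μ) with hpwcd
  set wc := ⇑((w : X) : Lp ℂ ((2 * k + 2 : ℕ) : ℝ≥0∞) μ) with hwcd
  set hcf := ⇑((h : X) : Lp ℂ ((2 * k + 2 : ℕ) : ℝ≥0∞) μ) with hhcd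
  set z1c := ⇑((z1 : X) : Lp ℂ ((2 * k + 2 : ℕ) : ℝ≥0∞) μ) with hz1cd
  set z0c := ⇑((z0 : X) : Lp ℂ ((2 * k + 2 : ℕ) : ℝ≥0∞) μ) with hz0cd
  have hz1c : z1c =ᵐ[μ] fun ω => hcf ω - vc ω := by
    have h1 : ((z1 : X) : Lp ℂ ((2 * k + 2 : ℕ) : ℝ≥0∞) μ)
        = ((h : X) : Lp ℂ ((2 * k + 2 : ℕ) : ℝ≥0∞) μ) -
          ((P h : X) : Lp ℂ ((2 * k + 2 : ℕ) : ℝ≥0∞) μ) := rfl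
    rw [hz1cd, h1]
    filter_upwards [Lp.coeFn_sub ((h : X) : Lp ℂ ((2 * k + 2 : ℕ) : ℝ≥0∞) μ)
      ((P h : X) : Lp ℂ ((2 * k + 2 : ℕ) : ℝ≥0∞) μ)] with ω h2
    rw [h2, Pi.sub_apply]
  have hz0c : z0c =ᵐ[μ] fun ω => wc ω - pwc ω := by
    have h1 : ((z0 : X) : Lp ℂ ((2 * k + 2 : ℕ) : ℝ≥0∞) μ)
        = ((w : X) : Lp ℂ ((2 * k + 2 : ℕ) : ℝ≥0∞) μ) -
          ((P w : X) : Lp ℂ ((2 * k + 2 : ℕ) : ℝ≥0∞) μ) := rfl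
    rw [hz0cd, h1]
    filter_upwards [Lp.coeFn_sub ((w : X) : Lp ℂ ((2 * k + 2 : ℕ) : ℝ≥0∞) μ)
      ((P w : X) : Lp ℂ ((2 * k + 2 : ℕ) : ℝ≥0∞) μ)] with ω h2
    rw [h2, Pi.sub_apply]
  -- the four orthogonality facts
  have fact1 := lemC (P w) o z0 (hproj w) hPo hz0P 0 0 1 0 (by omega) (by omega)
  simp only [pow_zero, pow_one, one_mul, mul_one] at fact1
  have fact2 := lemC (P h) (P f) z0 (hproj h) (hproj f) hz0P 0 0 1 1 (by omega) (by omega)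
  simp only [pow_zero, pow_one, one_mul, mul_one] at fact2
  have fact3 := lemC (P w) (P f) z1 (hproj w) (hproj f) hz1P 0 1 1 0 (by omega) (by omega)
  simp only [pow_zero, pow_one, one_mul, mul_one] at fact3
  have fact4 := lemC (P h) (P f) z1 (hproj h) (hproj f) hz1P 0 1 1 1 (by omega) (by omega)
  simp only [pow_zero, pow_one, one_mul, mul_one] at fact4
  -- memℒp shortcuts
  have hmU := hFmem (P f)
  have hmV := hFmem (P h)
  have hmPW := hFmem (P w)
  have hmZ0 := hFmem z0
  have hmZ1 := hFmem z1
  have hcU := Stmt10AuxC.memℒp_conj (k := k) hmU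
  have hcV := Stmt10AuxC.memℒp_conj (k := k) hmV
  have hcPW := Stmt10AuxC.memℒp_conj (k := k) hmPW
  have hI1 : Integrable (fun ω => conj (pwc ω) * z0c ω) μ := int2 _ _ hcPW hmZ0
  have hI2 : Integrable (fun ω => conj (vc ω) * conj (uc ω) * z0c ω) μ := int3 _ _ _ hcV hcU hmZ0
  have hI3 : Integrable (fun ω => uc ω * conj (pwc ω) * z1c ω) μ := int3 _ _ _ hmU hcPW hmZ1
  have hI4 : Integrable (fun ω => uc ω * conj (vc ω) * conj (uc ω) * z1c ω) μ :=
    int4 _ _ _ _ hmU hcV hcU hmZ1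
  -- main computation
  have hsum : ∫ ω, (pwc ω - vc ω * uc ω) * conj (pwc ω - vc ω * uc ω) ∂μ = 0 := by
    have hae : (fun ω => (pwc ω - vc ω * uc ω) * conj (pwc ω - vc ω * uc ω)) =ᵐ[μ]
        (fun ω => -(conj (pwc ω) * z0c ω) + conj (vc ω) * conj (uc ω) * z0c ω +
          uc ω * conj (pwc ω) * z1c ω - uc ω * conj (vc ω) * conj (uc ω) * z1c ω) := by
      filter_upwards [hw, hz0c, hz1c] with ω h1 h2 h3
      rw [h2, h3, h1]
      simp only [Pi.mul_apply, map_sub, map_mul]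
      ring
    rw [integral_congr_ae hae]
    have hI1n : Integrable (fun ω => -(conj (pwc ω) * z0c ω)) μ := hI1.neg
    have hI12 : Integrable (fun ω => -(conj (pwc ω) * z0c ω) +
        conj (vc ω) * conj (uc ω) * z0c ω) μ := hI1n.add hI2
    have hI123 : Integrable (fun ω => -(conj (pwc ω) * z0c ω) +
        conj (vc ω) * conj (uc ω) * z0c ω + uc ω * conj (pwc ω) * z1c ω) μ := hI12.add hI3
    rw [integral_sub hI123 hI4, integral_add hI12 hI3, integral_add hI1n hI2, integral_neg,
      fact1, fact2, fact3, fact4]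
    simp
  have hDD : Integrable (fun ω => (pwc ω - vc ω * uc ω) * conj (pwc ω - vc ω * uc ω)) μ := by
    have e1 : Integrable (fun ω => pwc ω * conj (pwc ω)) μ := int2 _ _ hmPW hcPW
    have e2 : Integrable (fun ω => pwc ω * conj (vc ω) * conj (uc ω)) μ := int3 _ _ _ hmPW hcV hcU
    have e3 : Integrable (fun ω => vc ω * uc ω * conj (pwc ω)) μ := int3 _ _ _ hmV hmU hcPW
    have e4 : Integrable (fun ω => vc ω * uc ω * conj (vc ω) * conj (uc ω)) μ :=
      int4 _ _ _ _ hmV hmU hcV hcU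
    apply (((e1.sub e2).sub e3).add e4).congr
    filter_upwards with ω
    simp only [Pi.add_apply, Pi.sub_apply, Pi.neg_apply, map_sub, map_mul]
    ring
  have hnsq0 : ∫ ω, Complex.normSq (pwc ω - vc ω * uc ω) ∂μ = 0 := by
    have h1 : ∫ ω, ((Complex.normSq (pwc ω - vc ω * uc ω) : ℝ) : ℂ) ∂μ = 0 := by
      rw [← hsum]
      apply integral_congr_ae
      filter_upwards with ω
      rw [Complex.mul_conj]
    have h2 : ((∫ ω, Complex.normSq (pwc ω - vc ω * uc ω) ∂μ : ℝ) : ℂ) = 0 := by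
      rw [← h1]
      exact integral_ofReal.symm
    exact_mod_cast h2
  have hnsqI : Integrable (fun ω => Complex.normSq (pwc ω - vc ω * uc ω)) μ := by
    apply hDD.re.congr
    filter_upwards with ω
    rw [Complex.mul_conj]
    simp
  have hD0 := (integral_eq_zero_iff_of_nonneg_ae
    (Filter.Eventually.of_forall fun ω => Complex.normSq_nonneg _) hnsqI).mp hnsq0
  filter_upwards [hD0] with ω hω
  have h5 : pwc ω - vc ω * uc ω = 0 := Complex.normSq_eq_zero.mp (by simpa using hω)
  have h6 : pwc ω = vc ω * uc ω := by
    rw [sub_eq_zero] at h5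
    exact h5
  simpa [Pi.mul_apply] using h6
end

section
/- Let p = 2k + 2 with k ≥ 1, X a closed subspace of L^p(μ) containing the constants, and P a contractive projection on X with P1 = 1 satisfying the averaging identity P(h·Pf) = Ph·Pf for multipliers h. Then for every h in the multiplier algebra M(X), Ph ∈ L^∞(μ) and ‖Ph‖_∞ ≤ ‖h‖_∞. -/
open MeasureTheory
open scoped ENNReal

theorem aux11 {Ω : Type*} {m0 : MeasurableSpace Ω} (μ : Measure Ω) [IsProbabilityMeasure μ]
    (p : ℝ≥0∞) [Fact (1 ≤ p)] (hp0 : p ≠ 0) (hpt : p ≠ ⊤)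
    (X : Submodule ℂ (Lp ℂ p μ))
    (P : X →L[ℂ] X) (hproj : ∀ x : X, P (P x) = P x) (hP : ‖P‖ ≤ 1)
    (h : X) (hmul : ∀ f : X, ∃ u : X,
      ⇑((u : X) : Lp ℂ p μ) =ᵐ[μ] ⇑((h : X) : Lp ℂ p μ) * ⇑((f : X) : Lp ℂ p μ))
    (havg : ∀ f w : X,
      ⇑((w : X) : Lp ℂ p μ) =ᵐ[μ] ⇑((h : X) : Lp ℂ p μ) * ⇑((P f : X) : Lp ℂ p μ) →
        ⇑((P w : X) : Lp ℂ p μ) =ᵐ[μ] ⇑((P h : X) : Lp ℂ p μ) * ⇑((P f : X) : Lp ℂ p μ)) :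
    eLpNorm (⇑((P h : X) : Lp ℂ p μ)) ⊤ μ ≤ eLpNorm (⇑((h : X) : Lp ℂ p μ)) ⊤ μ := by
  set H : Ω → ℂ := ⇑((h : X) : Lp ℂ p μ) with hHdef
  set g : Ω → ℂ := ⇑((P h : X) : Lp ℂ p μ) with hgdef
  set M : ℝ≥0∞ := eLpNorm H ⊤ μ with hMdef
  set G : ℝ≥0∞ := eLpNorm g p μ with hGdef
  have hGt : G < ⊤ := Lp.eLpNorm_lt_top _
  -- contraction in eLpNorm form
  have hcontr : ∀ v : X, eLpNorm (⇑((P v : X) : Lp ℂ p μ)) p μ ≤ eLpNorm (⇑((v : X) : Lp ℂ p μ)) p μ := by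
    intro v
    rw [← Lp.enorm_def ((P v : X) : Lp ℂ p μ), ← Lp.enorm_def ((v : X) : Lp ℂ p μ)]
    simp only [enorm_eq_nnnorm, ENNReal.coe_le_coe]
    have : ‖P v‖ ≤ ‖v‖ := by
      calc ‖P v‖ ≤ ‖P‖ * ‖v‖ := P.le_opNorm v
        _ ≤ 1 * ‖v‖ := by gcongr
        _ = ‖v‖ := one_mul _
    exact this
  have key : ∀ n : ℕ, ∃ u : X, P u = u ∧
      (⇑((u : X) : Lp ℂ p μ) =ᵐ[μ] fun x => (g x) ^ (n + 1)) ∧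
      eLpNorm (⇑((u : X) : Lp ℂ p μ)) p μ ≤ M ^ n * G := by
    intro n
    induction n with
    | zero =>
      refine ⟨P h, hproj h, ?_, ?_⟩
      · filter_upwards [] with x; simp [g]
      · simp [G, g]
    | succ n ih =>
      obtain ⟨u, hPu, hue, hub⟩ := ih
      obtain ⟨w, hw⟩ := hmul u
      have hw' : ⇑((w : X) : Lp ℂ p μ) =ᵐ[μ] H * ⇑((P u : X) : Lp ℂ p μ) := by
        rw [hPu]; exact hw
      have hPw := havg u w hw'
      refine ⟨P w, hproj w, ?_, ?_⟩
      · refine hPw.trans ?_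
        rw [hPu]
        filter_upwards [hue] with x hx
        simp only [Pi.mul_apply, hx]
        ring
      · calc eLpNorm (⇑((P w : X) : Lp ℂ p μ)) p μ
            ≤ eLpNorm (⇑((w : X) : Lp ℂ p μ)) p μ := hcontr w
          _ = eLpNorm (fun x => H x * ((u : X) : Lp ℂ p μ) x) p μ := eLpNorm_congr_ae hw
          _ ≤ eLpNorm H ⊤ μ * eLpNorm (⇑((u : X) : Lp ℂ p μ)) p μ :=
              by have := eLpNorm_le_eLpNorm_top_mul_eLpNorm (μ := μ) p H (Lp.aestronglyMeasurable ((u : X) : Lp ℂ p μ)) (· * ·) 1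
                  (Filter.Eventually.of_forall fun x => le_of_eq (by rw [one_mul]; exact nnnorm_mul _ _))
                 rwa [ENNReal.coe_one, one_mul] at this
          _ ≤ M * (M ^ n * G) := by gcongr
          _ = M ^ (n + 1) * G := by ring

  -- Now the limiting argument
  rcases eq_top_or_lt_top M with hMt | hMt
  · rw [hMt]; exact le_top
  by_contra hlt
  push_neg at hlt
  obtain ⟨c, hMc, hce⟩ := exists_between hlt
  have hc0 : c ≠ 0 := ((zero_le : 0 ≤ M).trans_lt hMc).ne'
  have hct : c ≠ ⊤ := ne_top_of_lt hce
  have hr : 0 < p.toReal := ENNReal.toReal_pos hp0 hpt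
  set r : ℝ := p.toReal with hrdef
  set S : Set Ω := {x | c < (‖g x‖₊ : ℝ≥0∞)} with hSdef
  have hS : μ S ≠ 0 := by
    intro h0
    have hle : eLpNorm g ⊤ μ ≤ c := by
      rw [eLpNorm_exponent_top, eLpNormEssSup, essSup_eq_sInf]
      exact sInf_le h0
    exact absurd hle (not_le.mpr hce)
  set A : ℝ≥0∞ := (μ S) ^ (1 / r) with hAdef
  have hA0 : A ≠ 0 := by
    rw [hAdef, Ne, ENNReal.rpow_eq_zero_iff_of_pos (by positivity)]
    exact hS
  have main : ∀ n : ℕ, c ^ (n + 1) * A ≤ M ^ n * G := by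
    intro n
    obtain ⟨u, _, hue, hub⟩ := key n
    have hglow : c ^ (n + 1) * A ≤ eLpNorm (fun x => (g x) ^ (n + 1)) p μ := by
      have hfm : AEMeasurable (fun x => ((‖(g x) ^ (n + 1)‖₊ : ℝ≥0∞)) ^ r) μ := by
        have h1 : AEMeasurable g μ := (Lp.aestronglyMeasurable _).aemeasurable
        exact ((h1.pow_const (n + 1)).enorm).pow_const r
      have hsub : S ⊆ {x | (c ^ (n + 1)) ^ r ≤ ((‖(g x) ^ (n + 1)‖₊ : ℝ≥0∞)) ^ r} := by
        intro x hx
        have hgx : c ≤ (‖g x‖₊ : ℝ≥0∞) := (le_of_lt hx)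
        have : c ^ (n + 1) ≤ (‖(g x) ^ (n + 1)‖₊ : ℝ≥0∞) := by
          rw [nnnorm_pow]
          push_cast
          exact pow_le_pow_left' hgx _
        exact ENNReal.rpow_le_rpow this hr.le
      have hint : (c ^ (n + 1)) ^ r * μ S ≤ ∫⁻ x, ((‖(g x) ^ (n + 1)‖₊ : ℝ≥0∞)) ^ r ∂μ := by
        calc (c ^ (n + 1)) ^ r * μ S
            ≤ (c ^ (n + 1)) ^ r * μ {x | (c ^ (n + 1)) ^ r ≤ ((‖(g x) ^ (n + 1)‖₊ : ℝ≥0∞)) ^ r} := by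
              exact mul_le_mul_right (measure_mono hsub) _
          _ ≤ _ := mul_meas_ge_le_lintegral₀ hfm _
      rw [eLpNorm_eq_lintegral_rpow_enorm_toReal hp0 hpt]
      calc c ^ (n + 1) * A
          = ((c ^ (n + 1)) ^ r * μ S) ^ (1 / r) := by
            rw [ENNReal.mul_rpow_of_nonneg _ _ (by positivity : (0:ℝ) ≤ 1 / r),
              ← ENNReal.rpow_mul, mul_one_div_cancel hr.ne', ENNReal.rpow_one, hAdef]
        _ ≤ (∫⁻ x, ((‖(g x) ^ (n + 1)‖₊ : ℝ≥0∞)) ^ r ∂μ) ^ (1 / r) :=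
            ENNReal.rpow_le_rpow hint (by positivity)
    calc c ^ (n + 1) * A ≤ eLpNorm (fun x => (g x) ^ (n + 1)) p μ := hglow
      _ = eLpNorm (⇑((u : X) : Lp ℂ p μ)) p μ := (eLpNorm_congr_ae hue).symm
      _ ≤ M ^ n * G := hub
  have hbound : ∀ n : ℕ, A ≤ (M / c) ^ n * (G / c) := by
    intro n
    have h1 : A * c ^ (n + 1) ≤ M ^ n * G := by rw [mul_comm]; exact main n
    have h2 : A ≤ (M ^ n * G) / c ^ (n + 1) :=
      (ENNReal.le_div_iff_mul_le (Or.inl (pow_ne_zero _ hc0)) (Or.inl (ENNReal.pow_ne_top hct))).mpr h1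
    refine h2.trans_eq ?_
    rw [div_eq_mul_inv, div_eq_mul_inv, div_eq_mul_inv, ENNReal.inv_pow, mul_pow]
    ring
  have hGc : G / c ≠ ⊤ := (ENNReal.div_lt_top hGt.ne hc0).ne
  have hdiv : M / c < 1 := by
    rw [ENNReal.div_lt_iff (Or.inl hc0) (Or.inl hct), one_mul]
    exact hMc
  have htend : Filter.Tendsto (fun n : ℕ => (M / c) ^ n * (G / c)) Filter.atTop (nhds 0) := by
    have h1 := ENNReal.tendsto_pow_atTop_nhds_zero_of_lt_one hdiv
    simpa using ENNReal.Tendsto.mul_const h1 (Or.inr hGc)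
  exact hA0 (le_antisymm (ge_of_tendsto' htend hbound) (zero_le : 0 ≤ A))

/-- Let `p = 2k+2` with `k ≥ 1`, `X` a closed subspace of `L^p(μ)` containing the constants,
and `P` a contractive projection on `X` with `P1 = 1` satisfying the averaging identity
`P(h·Pf) = Ph·Pf` for multipliers. Then for every multiplier `h` of `X`, `Ph ∈ L^∞(μ)` with
`‖Ph‖_∞ ≤ ‖h‖_∞`. -/
theorem stmt11 {Ω : Type*} {m0 : MeasurableSpace Ω} (μ : Measure Ω) [IsProbabilityMeasure μ]
    (k : ℕ) (hk : 1 ≤ k) [Fact (1 ≤ ((2 * k + 2 : ℕ) : ℝ≥0∞))]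
    (X : Submodule ℂ (Lp ℂ ((2 * k + 2 : ℕ) : ℝ≥0∞) μ))
    (hX : IsClosed (X : Set (Lp ℂ ((2 * k + 2 : ℕ) : ℝ≥0∞) μ)))
    (hconst : ∀ c : ℂ, ∃ u : X, ⇑((u : X) : Lp ℂ ((2 * k + 2 : ℕ) : ℝ≥0∞) μ) =ᵐ[μ] fun _ => c)
    (P : X →L[ℂ] X) (hproj : ∀ x : X, P (P x) = P x) (hP : ‖P‖ ≤ 1)
    (o : X) (ho : ⇑((o : X) : Lp ℂ ((2 * k + 2 : ℕ) : ℝ≥0∞) μ) =ᵐ[μ] fun _ => (1 : ℂ))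
    (hPo : P o = o)
    -- `h` is a multiplier of `X`:
    (h : X) (hmul : ∀ f : X, ∃ u : X,
      ⇑((u : X) : Lp ℂ ((2 * k + 2 : ℕ) : ℝ≥0∞) μ) =ᵐ[μ]
        ⇑((h : X) : Lp ℂ ((2 * k + 2 : ℕ) : ℝ≥0∞) μ) * ⇑((f : X) : Lp ℂ ((2 * k + 2 : ℕ) : ℝ≥0∞) μ))
    -- the averaging identity:
    (havg : ∀ f w : X,
      ⇑((w : X) : Lp ℂ ((2 * k + 2 : ℕ) : ℝ≥0∞) μ) =ᵐ[μ]
          ⇑((h : X) : Lp ℂ ((2 * k + 2 : ℕ) : ℝ≥0∞) μ) *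
            ⇑((P f : X) : Lp ℂ ((2 * k + 2 : ℕ) : ℝ≥0∞) μ) →
        ⇑((P w : X) : Lp ℂ ((2 * k + 2 : ℕ) : ℝ≥0∞) μ) =ᵐ[μ]
          ⇑((P h : X) : Lp ℂ ((2 * k + 2 : ℕ) : ℝ≥0∞) μ) *
            ⇑((P f : X) : Lp ℂ ((2 * k + 2 : ℕ) : ℝ≥0∞) μ)) :
    eLpNorm (⇑((P h : X) : Lp ℂ ((2 * k + 2 : ℕ) : ℝ≥0∞) μ)) ⊤ μ ≤
      eLpNorm (⇑((h : X) : Lp ℂ ((2 * k + 2 : ℕ) : ℝ≥0∞) μ)) ⊤ μ := by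
  exact aux11 μ ((2 * k + 2 : ℕ) : ℝ≥0∞) (by simp) (ENNReal.natCast_ne_top _) X P hproj hP h hmul havg
end

section
/- Let (Ω, Σ, μ) be a probability space, Σ' ⊆ Σ a sub-σ-algebra, and K a positive function with K ∈ L^1(μ) and log K ∈ L^1(μ). Then K / E(K | Σ') ∈ L^1(μ) and log E(K | Σ') ∈ L^1(μ). -/
open MeasureTheory

/-- If `K > 0` with `K ∈ L¹(μ)` and `log K ∈ L¹(μ)`, then `K/E(K|Σ') ∈ L¹(μ)` and
`log E(K|Σ') ∈ L¹(μ)`. -/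
theorem stmt18 {Ω : Type*} {m0 : MeasurableSpace Ω} (μ : Measure Ω) [IsProbabilityMeasure μ]
    (m : MeasurableSpace Ω) (hm : m ≤ m0) (K : Ω → ℝ) (hKpos : ∀ x, 0 < K x)
    (hK : Integrable K μ) (hlogK : Integrable (fun x => Real.log (K x)) μ) :
    Integrable (fun x => K x / (μ[K|m]) x) μ ∧
    Integrable (fun x => Real.log ((μ[K|m]) x)) μ := by
  haveI : SigmaFinite (μ.trim hm) := (isFiniteMeasure_trim hm).toSigmaFinite
  letI : MeasurableSpace Ω := m0
  set g : Ω → ℝ := μ[K|m] with hgdef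
  have hgm : StronglyMeasurable[m] g := stronglyMeasurable_condExp
  have hgm' : Measurable[m] g := hgm.measurable
  have hgmeas : Measurable[m0] g := hgm'.mono hm le_rfl
  have hg_int : Integrable g μ := integrable_condExp
  -- positivity of the conditional expectation
  have hg_pos : ∀ᵐ x ∂μ, 0 < g x := by
    set s : Set Ω := {x | g x ≤ 0} with hs_def
    have hs : MeasurableSet[m] s := measurableSet_le hgm' measurable_const
    have hs0 : MeasurableSet[m0] s := hm s hs
    have h1 : ∫ x in s, g x ∂μ = ∫ x in s, K x ∂μ := setIntegral_condExp hm hK hs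
    have h2 : ∫ x in s, g x ∂μ ≤ 0 := setIntegral_nonpos hs0 fun x hx => hx
    have h3 : ∫ x in s, K x ∂μ ≤ 0 := by rw [← h1]; exact h2
    have hμs : μ s = 0 := by
      by_contra hne
      have hpos : 0 < μ (Function.support K ∩ s) := by
        have : Function.support K = Set.univ := Set.eq_univ_of_forall fun x => (hKpos x).ne'
        rw [this, Set.univ_inter]
        exact pos_iff_ne_zero.2 hne
      have := (setIntegral_pos_iff_support_of_nonneg_ae
        (ae_of_all _ fun x => (hKpos x).le : 0 ≤ᵐ[μ.restrict s] K)
        (hK.integrableOn)).2 hpos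
      linarith
    have : {x | ¬ 0 < g x} = s := by
      ext x; simp [hs_def, not_lt]
    rw [ae_iff, this]; exact hμs
  -- the truncated multipliers
  set c : ℕ → Ω → ℝ := fun n x => min (g x)⁻¹ (n : ℝ) with hc_def
  have hc_meas : ∀ n, StronglyMeasurable[m] (c n) := fun n =>
    (hgm'.inv.min measurable_const).stronglyMeasurable
  have hc_nonneg : ∀ᵐ x ∂μ, ∀ n, 0 ≤ c n x := by
    filter_upwards [hg_pos] with x hx n
    exact le_min (inv_nonneg.2 hx.le) (Nat.cast_nonneg n)
  have hc_bdd : ∀ n, ∀ᵐ x ∂μ, ‖c n x‖ ≤ (n : ℝ) := by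
    intro n
    filter_upwards [hc_nonneg] with x hx
    rw [Real.norm_eq_abs, abs_of_nonneg (hx n)]
    exact min_le_right _ _
  have hcK_int : ∀ n, Integrable (fun x => c n x * K x) μ := fun n =>
    hK.bdd_mul (((hc_meas n).mono hm).aestronglyMeasurable) (hc_bdd n)
  have hcg_int : ∀ n, Integrable (fun x => c n x * g x) μ := fun n =>
    hg_int.bdd_mul (((hc_meas n).mono hm).aestronglyMeasurable) (hc_bdd n)
  -- pull-out property
  have h_pull : ∀ n, μ[(fun x => c n x * K x)|m] =ᵐ[μ] fun x => c n x * g x := fun n =>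
    condExp_mul_of_stronglyMeasurable_left (hc_meas n) (hcK_int n) hK
  have h_int_le : ∀ n, ∫ x, c n x * K x ∂μ ≤ 1 := by
    intro n
    have e1 : ∫ x, c n x * K x ∂μ = ∫ x, (μ[(fun x => c n x * K x)|m]) x ∂μ :=
      (integral_condExp hm).symm
    have e2 : ∫ x, (μ[(fun x => c n x * K x)|m]) x ∂μ = ∫ x, c n x * g x ∂μ :=
      integral_congr_ae (h_pull n)
    have e3 : ∫ x, c n x * g x ∂μ ≤ ∫ x, (1 : ℝ) ∂μ := by
      refine integral_mono_ae (hcg_int n) (integrable_const 1) ?_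
      filter_upwards [hg_pos] with x hx
      calc c n x * g x ≤ (g x)⁻¹ * g x :=
            mul_le_mul_of_nonneg_right (min_le_left _ _) hx.le
        _ = 1 := inv_mul_cancel₀ hx.ne'
    rw [e1, e2]
    simpa using e3
  have h_lint_le : ∀ n, ∫⁻ x, ENNReal.ofReal (c n x * K x) ∂μ ≤ 1 := by
    intro n
    rw [← ofReal_integral_eq_lintegral_ofReal (hcK_int n)
      (by filter_upwards [hc_nonneg] with x hx
          exact mul_nonneg (hx n) (hKpos x).le)]
    exact ENNReal.ofReal_le_one.2 (h_int_le n)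
  have h_mono : ∀ x, Monotone fun n : ℕ => ENNReal.ofReal (c n x * K x) := by
    intro x n k hnk
    exact ENNReal.ofReal_le_ofReal
      (mul_le_mul_of_nonneg_right (min_le_min le_rfl (Nat.cast_le.2 hnk)) (hKpos x).le)
  have h_sup : ∀ᵐ x ∂μ,
      (⨆ n : ℕ, ENNReal.ofReal (c n x * K x)) = ENNReal.ofReal (K x / g x) := by
    filter_upwards [hg_pos] with x hx
    refine le_antisymm (iSup_le fun n => ENNReal.ofReal_le_ofReal ?_) ?_
    · calc c n x * K x ≤ (g x)⁻¹ * K x :=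
          mul_le_mul_of_nonneg_right (min_le_left _ _) (hKpos x).le
        _ = K x / g x := (div_eq_inv_mul _ _).symm
    · refine le_iSup_of_le ⌈(g x)⁻¹⌉₊ (le_of_eq ?_)
      have : c ⌈(g x)⁻¹⌉₊ x = (g x)⁻¹ := min_eq_left (Nat.le_ceil _)
      rw [this, div_eq_inv_mul]
  have hcK_aemeas : ∀ n, AEMeasurable (fun x => ENNReal.ofReal (c n x * K x)) μ := by
    intro n
    exact ((hgmeas.inv.min measurable_const).aemeasurable.mul
      hK.aestronglyMeasurable.aemeasurable).ennreal_ofReal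
  have h_lint_fin : ∫⁻ x, ENNReal.ofReal (K x / g x) ∂μ ≤ 1 := by
    rw [← lintegral_congr_ae h_sup, lintegral_iSup' hcK_aemeas (ae_of_all _ h_mono)]
    exact iSup_le h_lint_le
  have part1 : Integrable (fun x => K x / g x) μ := by
    refine ⟨(hK.aestronglyMeasurable.aemeasurable.div hgmeas.aemeasurable).aestronglyMeasurable, ?_⟩
    show (∫⁻ x, (‖K x / g x‖₊ : ENNReal) ∂μ) < ⊤
    have : ∫⁻ x, (‖K x / g x‖₊ : ENNReal) ∂μ = ∫⁻ x, ENNReal.ofReal (K x / g x) ∂μ := by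
      refine lintegral_congr_ae ?_
      filter_upwards [hg_pos] with x hx
      exact Real.enorm_eq_ofReal (div_nonneg (hKpos x).le hx.le)
    rw [this]
    exact lt_of_le_of_lt h_lint_fin ENNReal.one_lt_top
  refine ⟨part1, ?_⟩
  -- second part: log of the conditional expectation is integrable
  have hb_int : Integrable
      (fun x => |g x| + |K x / g x - 1 - Real.log (K x)|) μ :=
    hg_int.abs.add ((part1.sub (integrable_const 1)).sub hlogK).abs
  refine Integrable.mono hb_int
    ((Real.measurable_log.comp hgmeas).aestronglyMeasurable) ?_
  filter_upwards [hg_pos] with x hx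
  rw [Real.norm_eq_abs, Real.norm_eq_abs]
  have hb_nonneg : 0 ≤ |g x| + |K x / g x - 1 - Real.log (K x)| :=
    add_nonneg (abs_nonneg _) (abs_nonneg _)
  rw [abs_of_nonneg hb_nonneg]
  have h1 : Real.log (g x) ≤ g x - 1 := Real.log_le_sub_one_of_pos hx
  have h2 : Real.log (K x / g x) ≤ K x / g x - 1 :=
    Real.log_le_sub_one_of_pos (div_pos (hKpos x) hx)
  rw [Real.log_div (hKpos x).ne' hx.ne'] at h2
  have h3 : g x ≤ |g x| := le_abs_self _
  have h4 : K x / g x - 1 - Real.log (K x) ≤ |K x / g x - 1 - Real.log (K x)| := le_abs_self _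
  have h5 : 0 ≤ |K x / g x - 1 - Real.log (K x)| := abs_nonneg _
  have h6 : 0 ≤ |g x| := abs_nonneg _
  rw [abs_le]
  constructor <;> linarith
end
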